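/- arXiv:1710.08233 — 7 statements merged into one kernel-verified Lean document; each statement's English description precedes it below -/
import Mathlib

section
/- Assume g : ℝⁿ → [0, +∞] is lower semicontinuous and W : ℝⁿ → (−∞, +∞] is a lower semicontinuous proper convex function with W(x) → +∞ as ‖x‖ → +∞. Then for all x ∈ ℝⁿ and all 0 < s < h, the infimum defining Q_h^W(g)(x) is attained and the semigroup property holds: Q_h^W(g)(x) = Q_{h−s}^W(Q_s^W(g))(x). -/
open Filter

/-!
The integrand `y ↦ g (x - h • y) + h * W y` is lower semicontinuous (here `W ≠ ⊥` and `g ≥ 0`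
rule out `⊤ + ⊥`) and tends to `⊤` at infinity, so it attains its infimum. For the semigroup law,
the choice `w = z` in the iterated infimum gives `Q_{h-s}(Q_s g) ≤ Q_h g`. Conversely, given `z`
and a minimiser `w` of the inner infimum, the point `y = (1 - s/h) • z + (s/h) • w` satisfies
`x - h • y = x - (h - s) • z - s • w`, and convexity of `W` gives
`h * W y ≤ (h - s) * W z + s * W w`.
-/

theorem LowerSemicontinuous.exists_forall_le' {α β : Type*} [TopologicalSpace α] [LinearOrder β]
    {f : α → β} (hf : LowerSemicontinuous f) (x₀ : α) (h : ∀ᶠ x in cocompact α, f x₀ ≤ f x) :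
    ∃ x, ∀ y, f x ≤ f y := by
  obtain ⟨K, hK, hKf⟩ := mem_cocompact.mp h
  obtain ⟨x, -, hmin⟩ := LowerSemicontinuousOn.exists_isMinOn (Set.insert_nonempty x₀ K)
    (hK.insert x₀) (hf.lowerSemicontinuousOn _)
  refine ⟨x, fun y => ?_⟩
  by_cases hy : y ∈ K
  · exact hmin (Set.mem_insert_of_mem x₀ hy)
  · exact (hmin (Set.mem_insert x₀ K)).trans (hKf hy)

theorem LowerSemicontinuous.exists_forall_le_of_tendsto_top {α β : Type*} [TopologicalSpace α]
    [Nonempty α] [LinearOrder β] [OrderTop β] [TopologicalSpace β] [ClosedIicTopology β]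
    {f : α → β} (hf : LowerSemicontinuous f) (hlim : Tendsto f (cocompact α) (nhds ⊤)) :
    ∃ x, ∀ y, f x ≤ f y := by
  by_cases hfin : ∃ x₀, f x₀ < ⊤
  · obtain ⟨x₀, hx₀⟩ := hfin
    exact hf.exists_forall_le' x₀ ((hlim.eventually (Ioi_mem_nhds hx₀)).mono fun _ => le_of_lt)
  · exact ⟨Classical.arbitrary α, fun y => le_of_not_gt fun hy => hfin ⟨y, hy.trans_le le_top⟩⟩

namespace EReal

theorem continuous_coe_mul (c : ℝ) : Continuous fun x : EReal => (c : EReal) * x :=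
  continuous_iff_continuousAt.2 fun _ =>
    EReal.Tendsto.const_mul tendsto_id (.inl (coe_ne_bot c)) (.inl (coe_ne_top c))

theorem coe_mul_ne_bot {c : ℝ} (hc : 0 ≤ c) {x : EReal} (hx : x ≠ ⊥) : (c : EReal) * x ≠ ⊥ :=
  (mul_ne_bot _ _).2 ⟨.inl (coe_ne_bot c), .inr hx, .inl (coe_ne_top c), .inl (EReal.coe_nonneg.2 hc)⟩

end EReal

theorem LowerSemicontinuous.coe_mul {α : Type*} [TopologicalSpace α] {f : α → EReal}
    (hf : LowerSemicontinuous f) {c : ℝ} (hc : 0 ≤ c) :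
    LowerSemicontinuous fun x => (c : EReal) * f x :=
  (EReal.continuous_coe_mul c).comp_lowerSemicontinuous hf fun _ _ hab =>
    mul_le_mul_of_nonneg_left hab (EReal.coe_nonneg.2 hc)

section HopfLax

variable {E : Type*} [AddCommGroup E] [Module ℝ E]

/-- `hopfLax W g h` is the operator `Q_h^W(g)`. -/
noncomputable def hopfLax (W g : E → EReal) (h : ℝ) (x : E) : EReal :=
  ⨅ y, g (x - h • y) + h * W y

theorem coe_mul_le_of_convex {W : E → EReal}
    (hW_conv : ∀ x y : E, ∀ t : ℝ, 0 ≤ t → t ≤ 1 →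
      W ((1 - t) • x + t • y) ≤ (((1 - t) : ℝ) : EReal) * W x + ((t : ℝ) : EReal) * W y)
    {s h : ℝ} (hs : 0 < s) (hsh : s < h) (z w : E) :
    (h : EReal) * W ((1 - s / h) • z + (s / h) • w) ≤ ((h - s : ℝ) : EReal) * W z + s * W w := by
  have hh : 0 < h := hs.trans hsh
  calc (h : EReal) * W ((1 - s / h) • z + (s / h) • w)
      ≤ h * (((1 - s / h : ℝ) : EReal) * W z + ((s / h : ℝ) : EReal) * W w) :=
        mul_le_mul_of_nonneg_left (hW_conv z w (s / h) (by positivity) ((div_le_one hh).2 hsh.le))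
          (EReal.coe_nonneg.2 hh.le)
    _ = ((h * (1 - s / h) : ℝ) : EReal) * W z + ((h * (s / h) : ℝ) : EReal) * W w := by
        rw [EReal.left_distrib_of_nonneg_of_ne_top (EReal.coe_nonneg.2 hh.le) (EReal.coe_ne_top h),
          ← mul_assoc, ← mul_assoc, ← EReal.coe_mul, ← EReal.coe_mul]
    _ = ((h - s : ℝ) : EReal) * W z + s * W w := by
        rw [mul_one_sub, mul_div_cancel₀ s hh.ne']

variable [TopologicalSpace E] [IsTopologicalAddGroup E] [ContinuousSMul ℝ E]

theorem exists_hopfLax_eq {W g : E → EReal} (hg_lsc : LowerSemicontinuous g)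
    (hg_nonneg : ∀ x, 0 ≤ g x) (hW_lsc : LowerSemicontinuous W) (hW_nbot : ∀ x, W x ≠ ⊥)
    (hW_coercive : Tendsto W (cocompact E) (nhds ⊤)) {h : ℝ} (hh : 0 < h) (x : E) :
    ∃ y, hopfLax W g h x = g (x - h • y) + h * W y := by
  set F : E → EReal := fun y => g (x - h • y) + h * W y
  have hF_lsc : LowerSemicontinuous F :=
    (hg_lsc.comp (continuous_const.sub (continuous_const_smul h))).add' (hW_lsc.coe_mul hh.le)
      fun y => EReal.continuousAt_add (.inr (EReal.coe_mul_ne_bot hh.le (hW_nbot y)))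
        (.inl (EReal.bot_lt_zero.trans_le (hg_nonneg _)).ne')
  have hF_lim : Tendsto F (cocompact E) (nhds ⊤) := by
    have hmul := EReal.Tendsto.const_mul hW_coercive (.inl (EReal.coe_ne_bot h))
      (.inl (EReal.coe_ne_top h))
    rw [EReal.coe_mul_top_of_pos hh] at hmul
    exact tendsto_nhds_top_mono' hmul fun y => le_add_of_nonneg_left (hg_nonneg _)
  obtain ⟨y, hy⟩ := hF_lsc.exists_forall_le_of_tendsto_top hF_lim
  exact ⟨y, le_antisymm (iInf_le F y) (le_iInf hy)⟩

theorem hopfLax_eq_hopfLax_hopfLax {W g : E → EReal} (hg_lsc : LowerSemicontinuous g)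
    (hg_nonneg : ∀ x, 0 ≤ g x) (hW_lsc : LowerSemicontinuous W) (hW_nbot : ∀ x, W x ≠ ⊥)
    (hW_conv : ∀ x y : E, ∀ t : ℝ, 0 ≤ t → t ≤ 1 →
      W ((1 - t) • x + t • y) ≤ (((1 - t) : ℝ) : EReal) * W x + ((t : ℝ) : EReal) * W y)
    (hW_coercive : Tendsto W (cocompact E) (nhds ⊤)) {s h : ℝ} (hs : 0 < s) (hsh : s < h)
    (x : E) :
    hopfLax W g h x = hopfLax W (hopfLax W g s) (h - s) x := by
  apply le_antisymm
  · refine le_iInf fun z => ?_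
    obtain ⟨w, hw⟩ :=
      exists_hopfLax_eq hg_lsc hg_nonneg hW_lsc hW_nbot hW_coercive hs (x - (h - s) • z)
    set y := (1 - s / h) • z + (s / h) • w
    have hy : x - h • y = x - (h - s) • z - s • w := by
      simp only [y, smul_add, smul_smul, mul_one_sub, mul_div_cancel₀ s (hs.trans hsh).ne',
        sub_sub]
    calc hopfLax W g h x ≤ g (x - h • y) + h * W y := iInf_le _ y
      _ ≤ g (x - h • y) + (((h - s : ℝ) : EReal) * W z + s * W w) :=
        add_le_add_right (coe_mul_le_of_convex hW_conv hs hsh z w) _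
      _ = hopfLax W g s (x - (h - s) • z) + ((h - s : ℝ) : EReal) * W z := by
        rw [hw, hy, add_right_comm, add_assoc]
  · refine le_iInf fun y => ?_
    calc hopfLax W (hopfLax W g s) (h - s) x
        ≤ hopfLax W g s (x - (h - s) • y) + ((h - s : ℝ) : EReal) * W y := iInf_le _ y
      _ ≤ g (x - (h - s) • y - s • y) + s * W y + ((h - s : ℝ) : EReal) * W y :=
        add_le_add_left (iInf_le _ y) _
      _ = g (x - h • y) + h * W y := by
        rw [sub_sub, ← add_smul, sub_add_cancel, add_assoc, ← EReal.right_distrib_of_nonneg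
          (EReal.coe_nonneg.2 hs.le) (EReal.coe_nonneg.2 (sub_nonneg.2 hsh.le)), ← EReal.coe_add,
          add_sub_cancel]

end HopfLax

theorem Q_semigroup_general (n : ℕ) (g W : EuclideanSpace ℝ (Fin n) → EReal)
    (hg_lsc : LowerSemicontinuous g) (hg_nonneg : ∀ x, 0 ≤ g x)
    (hW_lsc : LowerSemicontinuous W)
    (hW_nbot : ∀ x, W x ≠ ⊥)
    (hW_conv : ∀ x y : EuclideanSpace ℝ (Fin n), ∀ t : ℝ, 0 ≤ t → t ≤ 1 →
      W ((1 - t) • x + t • y) ≤ (((1 - t) : ℝ) : EReal) * W x + ((t : ℝ) : EReal) * W y)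
    (hW_coercive : Tendsto W (cocompact (EuclideanSpace ℝ (Fin n))) (nhds ⊤)) :
    ∀ x : EuclideanSpace ℝ (Fin n), ∀ s h : ℝ, 0 < s → s < h →
      (∃ y : EuclideanSpace ℝ (Fin n),
        (⨅ z : EuclideanSpace ℝ (Fin n), g (x - h • z) + (h : EReal) * W z)
          = g (x - h • y) + (h : EReal) * W y)
      ∧ (⨅ z : EuclideanSpace ℝ (Fin n), g (x - h • z) + (h : EReal) * W z)
          = ⨅ z : EuclideanSpace ℝ (Fin n),
              (⨅ w : EuclideanSpace ℝ (Fin n),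
                g ((x - (h - s) • z) - s • w) + (s : EReal) * W w)
              + (((h - s) : ℝ) : EReal) * W z := by
  intro x s h hs hsh
  exact ⟨exists_hopfLax_eq hg_lsc hg_nonneg hW_lsc hW_nbot hW_coercive (hs.trans hsh) x,
    hopfLax_eq_hopfLax_hopfLax hg_lsc hg_nonneg hW_lsc hW_nbot hW_conv hW_coercive hs hsh x⟩

/-- if `g : ℝⁿ → [0,+∞]` is lsc and `W` is a lsc proper convex function with
`W(x) → +∞` as `‖x‖ → ∞`, then for all `x` and `0 < s < h` the infimum defining
`Q_h^W(g)(x)` is attained and `Q_h^W(g) = Q_{h-s}^W(Q_s^W(g))`. -/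
theorem Q_semigroup (n : ℕ) (g W : EuclideanSpace ℝ (Fin n) → EReal)
    (hg_lsc : LowerSemicontinuous g) (hg_nonneg : ∀ x, 0 ≤ g x)
    (hW_lsc : LowerSemicontinuous W)
    (hW_nbot : ∀ x, W x ≠ ⊥) (hW_proper : ∃ x, W x ≠ ⊤)
    (hW_conv : ∀ x y : EuclideanSpace ℝ (Fin n), ∀ t : ℝ, 0 ≤ t → t ≤ 1 →
      W ((1 - t) • x + t • y) ≤ (((1 - t) : ℝ) : EReal) * W x + ((t : ℝ) : EReal) * W y)
    (hW_coercive : Tendsto W (cocompact (EuclideanSpace ℝ (Fin n))) (nhds ⊤)) :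
    ∀ x : EuclideanSpace ℝ (Fin n), ∀ s h : ℝ, 0 < s → s < h →
      (∃ y : EuclideanSpace ℝ (Fin n),
        (⨅ z : EuclideanSpace ℝ (Fin n), g (x - h • z) + (h : EReal) * W z)
          = g (x - h • y) + (h : EReal) * W y)
      ∧ (⨅ z : EuclideanSpace ℝ (Fin n), g (x - h • z) + (h : EReal) * W z)
          = ⨅ z : EuclideanSpace ℝ (Fin n),
              (⨅ w : EuclideanSpace ℝ (Fin n),
                g ((x - (h - s) • z) - s • w) + (s : EReal) * W w)
              + (((h - s) : ℝ) : EReal) * W z :=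
  Q_semigroup_general n g W hg_lsc hg_nonneg hW_lsc hW_nbot hW_conv hW_coercive
end

section
/- Let f, g : ℝⁿ → ℝ be (everywhere finite) lower semicontinuous functions. If f is nonnegative and locally Lipschitz continuous, and g is coercive, then the infimal convolution f □ g is locally Lipschitz continuous on ℝⁿ. -/
open Filter Bornology

open Metric Set

lemma lsc_bddBelow_on_compact {X : Type*} [TopologicalSpace X] {g : X → ℝ}
    (hg : LowerSemicontinuous g) {K : Set X} (hK : IsCompact K) :
    ∃ c : ℝ, ∀ y ∈ K, c ≤ g y := by
  have hU : ∀ m : ℕ, IsOpen (g ⁻¹' Set.Ioi (-(m:ℝ))) := fun m =>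
    hg.isOpen_preimage _
  have hcover : K ⊆ ⋃ m : ℕ, g ⁻¹' Set.Ioi (-(m:ℝ)) := by
    intro y _
    obtain ⟨m, hm⟩ := exists_nat_gt (-(g y))
    exact Set.mem_iUnion.2 ⟨m, by simpa using neg_lt_of_neg_lt hm⟩
  obtain ⟨t, ht⟩ := hK.elim_finite_subcover _ hU hcover
  refine ⟨-(t.sup id : ℕ), fun y hy => ?_⟩
  obtain ⟨m, hm, hym⟩ := Set.mem_iUnion₂.1 (ht hy)
  have : ((m : ℕ) : ℝ) ≤ (t.sup id : ℕ) := by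
    exact_mod_cast Finset.le_sup (f := id) hm
  have := Set.mem_preimage.1 hym
  simp only [Set.mem_Ioi] at this
  linarith

/-- if `f, g : ℝⁿ → ℝ` are lsc, `f` is nonnegative and locally Lipschitz
(Lipschitz on every bounded set), and `g` is coercive, then `f □ g` is locally Lipschitz. -/
theorem infConv_locallyLipschitz (n : ℕ) (f g : EuclideanSpace ℝ (Fin n) → ℝ)
    (hf_lsc : LowerSemicontinuous f) (hg_lsc : LowerSemicontinuous g)
    (hf_nonneg : ∀ x, 0 ≤ f x)
    (hf_lip : ∀ s : Set (EuclideanSpace ℝ (Fin n)), IsBounded s →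
      ∃ K : NNReal, LipschitzOnWith K f s)
    (hg_coercive : Tendsto g (cocompact (EuclideanSpace ℝ (Fin n))) atTop) :
    ∀ s : Set (EuclideanSpace ℝ (Fin n)), IsBounded s →
      ∃ K : NNReal, LipschitzOnWith K
        (fun x => ⨅ y : EuclideanSpace ℝ (Fin n), f (x - y) + g y) s := by
  set h : EuclideanSpace ℝ (Fin n) → ℝ :=
    fun x => ⨅ y : EuclideanSpace ℝ (Fin n), f (x - y) + g y with hh
  -- g is bounded below
  obtain ⟨c, hc⟩ : ∃ c, ∀ y, c ≤ g y := by
    have h0 : ∀ᶠ y in cocompact (EuclideanSpace ℝ (Fin n)), (0:ℝ) ≤ g y :=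
      hg_coercive.eventually (eventually_ge_atTop 0)
    obtain ⟨K₀, hK₀, hsub⟩ := mem_cocompact.1 h0
    obtain ⟨c₀, hc₀⟩ := lsc_bddBelow_on_compact hg_lsc hK₀
    refine ⟨min c₀ 0, fun y => ?_⟩
    by_cases hy : y ∈ K₀
    · exact le_trans (min_le_left _ _) (hc₀ y hy)
    · exact le_trans (min_le_right _ _) (hsub hy)
  have hbdd : ∀ x, BddBelow (Set.range fun y => f (x - y) + g y) := by
    intro x
    refine ⟨c, ?_⟩
    rintro _ ⟨y, rfl⟩
    show c ≤ f (x - y) + g y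
    have := hf_nonneg (x - y); have := hc y; linarith
  intro s hs
  rcases s.eq_empty_or_nonempty with rfl | ⟨x₀, hx₀⟩
  · exact ⟨1, fun x hx => hx.elim⟩
  obtain ⟨r, hr⟩ := hs.subset_closedBall 0
  have hr0 : (0:ℝ) ≤ max r 0 := le_max_right _ _
  have hrs : s ⊆ closedBall 0 (max r 0) :=
    hr.trans (closedBall_subset_closedBall (le_max_left _ _))
  set r' := max r 0
  obtain ⟨K₁, hK₁⟩ := hf_lip (closedBall 0 r') isBounded_closedBall
  -- bound on f on s
  set M₁ : ℝ := f x₀ + K₁ * (2 * r') with hM₁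
  have hfM₁ : ∀ x ∈ s, f x ≤ M₁ := by
    intro x hx
    have hd : dist (f x) (f x₀) ≤ K₁ * dist x x₀ :=
      hK₁.dist_le_mul x (hrs hx) x₀ (hrs hx₀)
    have hdx : dist x x₀ ≤ 2 * r' := by
      have h1 : dist x (0:EuclideanSpace ℝ (Fin n)) ≤ r' := mem_closedBall.1 (hrs hx)
      have h2 : dist x₀ (0:EuclideanSpace ℝ (Fin n)) ≤ r' := mem_closedBall.1 (hrs hx₀)
      calc dist x x₀ ≤ dist x 0 + dist x₀ 0 := dist_triangle_right _ _ _
        _ ≤ 2 * r' := by linarith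
    have habs := abs_le.1 (by simpa [Real.dist_eq] using hd)
    rw [hM₁]
    linarith [mul_le_mul_of_nonneg_left hdx K₁.coe_nonneg, habs.2]
  set M : ℝ := M₁ + g 0 + 1 with hM
  have hhM : ∀ x ∈ s, h x ≤ M - 1 := by
    intro x hx
    have : h x ≤ f (x - 0) + g 0 := ciInf_le (hbdd x) 0
    simp only [sub_zero] at this
    have := hfM₁ x hx
    simp only [hM]
    linarith
  -- radius outside which g ≥ M
  obtain ⟨R, hR0, hgR⟩ : ∃ R : ℝ, 0 ≤ R ∧ ∀ y, g y < M → y ∈ closedBall (0:EuclideanSpace ℝ (Fin n)) R := by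
    have hev : ∀ᶠ y in cocompact (EuclideanSpace ℝ (Fin n)), M ≤ g y :=
      hg_coercive.eventually (eventually_ge_atTop M)
    obtain ⟨K₂, hK₂, hsub⟩ := mem_cocompact.1 hev
    obtain ⟨R, hRK⟩ := hK₂.isBounded.subset_closedBall 0
    refine ⟨max R 0, le_max_right _ _, fun y hy => ?_⟩
    by_cases hyK : y ∈ K₂
    · exact closedBall_subset_closedBall (le_max_left _ _) (hRK hyK)
    · exact absurd (hsub hyK) (not_le.2 hy)
  obtain ⟨K, hK⟩ := hf_lip (closedBall 0 (r' + R)) isBounded_closedBall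
  refine ⟨K, LipschitzOnWith.of_dist_le_mul ?_⟩
  -- one-sided estimate
  have key : ∀ x ∈ s, ∀ x' ∈ s, h x ≤ h x' + K * dist x x' := by
    intro x hx x' hx'
    refine le_of_forall_pos_le_add (fun ε hε => ?_)
    set ε' := min ε 1 with hε'
    have hε'0 : 0 < ε' := lt_min hε one_pos
    have hε'1 : ε' ≤ 1 := min_le_right _ _
    obtain ⟨y, hy⟩ : ∃ y, f (x' - y) + g y < h x' + ε' := by
      apply exists_lt_of_ciInf_lt
      exact lt_add_of_pos_right _ hε'0
    have hgy : g y < M := by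
      have h1 := hf_nonneg (x' - y)
      have h2 := hhM x' hx'
      linarith
    have hyR : y ∈ closedBall (0:EuclideanSpace ℝ (Fin n)) R := hgR y hgy
    have hyR' : dist y (0:EuclideanSpace ℝ (Fin n)) ≤ R := mem_closedBall.1 hyR
    have hmem : ∀ z ∈ s, z - y ∈ closedBall (0:EuclideanSpace ℝ (Fin n)) (r' + R) := by
      intro z hz
      have hz' : dist z (0:EuclideanSpace ℝ (Fin n)) ≤ r' := mem_closedBall.1 (hrs hz)
      rw [mem_closedBall, dist_eq_norm, sub_zero]
      calc ‖z - y‖ ≤ ‖z‖ + ‖y‖ := norm_sub_le _ _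
        _ ≤ r' + R := by
            rw [dist_eq_norm, sub_zero] at hz' hyR'
            linarith
    have hlip : dist (f (x - y)) (f (x' - y)) ≤ K * dist (x - y) (x' - y) :=
      hK.dist_le_mul _ (hmem x hx) _ (hmem x' hx')
    rw [dist_sub_right] at hlip
    have habs := (abs_le.1 (by simpa [Real.dist_eq] using hlip)).2
    have hx_le : h x ≤ f (x - y) + g y := ciInf_le (hbdd x) y
    have : h x ≤ h x' + ε' + K * dist x x' := by linarith
    have hεε : ε' ≤ ε := min_le_left _ _
    linarith
  intro x hx x' hx'
  rw [Real.dist_eq, abs_le]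
  constructor
  · have := key x' hx' x hx
    rw [dist_comm] at this
    linarith
  · have := key x hx x' hx'
    linarith
end

section
/- Let W : ℝⁿ → (0, +∞] be a convex function, and define g(x) = W(x + e) for a fixed vector e ∈ ℝⁿ. Then for every x ∈ ℝⁿ and h ≥ 0, Q_h^W(g)(x) = (1 + h) · W((x + e)/(1 + h)), and the infimum is attained at y = (x + e)/(1 + h). -/
/-! Convexity in perspective form gives `(1 + h) W ((a + h b) / (1 + h)) ≤ W a + h W b`; with
`a = x - h y + e` and `b = y` the left side no longer depends on `y`, so it bounds the infimum
from below. The bound is attained at `y₀ = (x + e) / (1 + h)`, because `x - h y₀ + e = y₀`. -/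

section Perspective

variable {E : Type*} [AddCommGroup E] [Module ℝ E]

theorem mul_apply_inv_smul_add_le_of_convex {W : E → EReal} (hW_nonneg : ∀ x, 0 ≤ W x)
    (hW_conv : ∀ x y : E, ∀ t : ℝ, 0 ≤ t → t ≤ 1 →
      W ((1 - t) • x + t • y) ≤ (((1 - t) : ℝ) : EReal) * W x + ((t : ℝ) : EReal) * W y)
    {s t : ℝ} (hs : 0 ≤ s) (ht : 0 ≤ t) (hst : 0 < s + t) (a b : E) :
    ((s + t : ℝ) : EReal) * W ((s + t)⁻¹ • (s • a + t • b))
      ≤ (s : EReal) * W a + (t : EReal) * W b := by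
  set τ : ℝ := t / (s + t)
  have hτ_nonneg : 0 ≤ τ := div_nonneg ht hst.le
  have hτ_le_one : τ ≤ 1 := (div_le_one hst).2 (by linarith)
  have hτ : (s + t) * τ = t := mul_div_cancel₀ t hst.ne'
  have hτ' : (s + t) * (1 - τ) = s := by rw [mul_one_sub, hτ]; ring
  have hpoint : (1 - τ) • a + τ • b = (s + t)⁻¹ • (s • a + t • b) := by
    rw [eq_inv_smul_iff₀ hst.ne', smul_add, smul_smul, smul_smul, hτ, hτ']
  have hconv := hW_conv a b τ hτ_nonneg hτ_le_one
  rw [hpoint] at hconv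
  calc ((s + t : ℝ) : EReal) * W ((s + t)⁻¹ • (s • a + t • b))
      ≤ ((s + t : ℝ) : EReal) * ((((1 - τ) : ℝ) : EReal) * W a + ((τ : ℝ) : EReal) * W b) :=
        mul_le_mul_of_nonneg_left hconv (by exact_mod_cast hst.le)
    _ = (s : EReal) * W a + (t : EReal) * W b := by
        rw [EReal.left_distrib_of_nonneg
          (mul_nonneg (by exact_mod_cast sub_nonneg.2 hτ_le_one) (hW_nonneg a))
          (mul_nonneg (by exact_mod_cast hτ_nonneg) (hW_nonneg b)),
          ← mul_assoc, ← mul_assoc, ← EReal.coe_mul, ← EReal.coe_mul, hτ, hτ']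

end Perspective

/-- for `W : ℝⁿ → (0,+∞]` convex and `g(x) = W(x+e)`, one has
`Q_h^W(g)(x) = (1+h)·W((x+e)/(1+h))` with the infimum attained at `y = (x+e)/(1+h)`. -/
theorem Q_of_translate (n : ℕ) (W : EuclideanSpace ℝ (Fin n) → EReal)
    (e : EuclideanSpace ℝ (Fin n))
    (hW_pos : ∀ x, 0 < W x)
    (hW_conv : ∀ x y : EuclideanSpace ℝ (Fin n), ∀ t : ℝ, 0 ≤ t → t ≤ 1 →
      W ((1 - t) • x + t • y) ≤ (((1 - t) : ℝ) : EReal) * W x + ((t : ℝ) : EReal) * W y) :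
    ∀ x : EuclideanSpace ℝ (Fin n), ∀ h : ℝ, 0 ≤ h →
      (⨅ y : EuclideanSpace ℝ (Fin n), W ((x - h • y) + e) + (h : EReal) * W y)
        = (((1 + h) : ℝ) : EReal) * W ((1 + h)⁻¹ • (x + e))
      ∧ (⨅ y : EuclideanSpace ℝ (Fin n), W ((x - h • y) + e) + (h : EReal) * W y)
        = W ((x - h • ((1 + h)⁻¹ • (x + e))) + e)
            + (h : EReal) * W ((1 + h)⁻¹ • (x + e)) := by
  intro x h hh
  set y₀ := (1 + h)⁻¹ • (x + e)
  have hfixed : (x - h • y₀) + e = y₀ := by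
    match_scalars <;> field_simp <;> ring
  have hattained : W ((x - h • y₀) + e) + (h : EReal) * W y₀ = ((1 + h : ℝ) : EReal) * W y₀ := by
    rw [hfixed, EReal.coe_add, EReal.right_distrib_of_nonneg (by norm_num) (by exact_mod_cast hh),
      EReal.coe_one, one_mul]
  have hlower (y : EuclideanSpace ℝ (Fin n)) :
      ((1 + h : ℝ) : EReal) * W y₀ ≤ W ((x - h • y) + e) + (h : EReal) * W y := by
    have hsum : ((x - h • y) + e) + h • y = x + e := by abel
    have := mul_apply_inv_smul_add_le_of_convex (fun z ↦ (hW_pos z).le) hW_conv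
      zero_le_one hh (by linarith) ((x - h • y) + e) y
    rwa [one_smul, hsum, EReal.coe_one, one_mul] at this
  have hinf : (⨅ y, W ((x - h • y) + e) + (h : EReal) * W y) = ((1 + h : ℝ) : EReal) * W y₀ :=
    le_antisymm (iInf_le_of_le y₀ hattained.le) (le_iInf hlower)
  exact ⟨hinf, hinf.trans hattained.symm⟩
end

section
/- Let φ : ℝ^{n−1} → ℝ be continuous with φ(0) = 0, let Ω = { (x₁, x₂) : x₂ ≥ φ(x₁) } be its epigraph, Ω_h = Ω + {h·e} with e = (0,1), and let B_h = { (x₁, x₂) : ∃ y₁ ∈ ℝ^{n−1}, x₂ ≥ φ(x₁ − h y₁) + h φ(y₁) + h }. Then there exists h₀ > 0 such that B_h = Ω_h for all h ∈ (0, h₀) if and only if φ is convex and positively homogeneous of degree 1 (i.e., Ω is a convex cone). In that case B_h = Ω_h for all h ≥ 0. -/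
/-!
Both set equalities reduce to the inequality `φ (x + h • y) ≤ φ x + h * φ y` for all `x, y`
(the point `(x, φ x + h * φ y + h)` with the witness `y` lies in `B_h`, and `y = 0` gives
`Ω_h ⊆ B_h`). The set of `h` for which it holds is closed under addition, so holding for all
small `h > 0` it holds for all `h > 0`. At `x = 0` the scales `t` and `t⁻¹` force positive
homogeneity, and `h = 1` gives subadditivity; a positively homogeneous subadditive
function is convex. Conversely convexity and homogeneity give subadditivity, hence the inequality.
-/

open Set

/-- The inequality characterising `B_h = Ω_h`. -/
def ScaledSubadditive {E : Type*} [AddCommGroup E] [Module ℝ E] (f : E → ℝ) (h : ℝ) : Prop :=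
  ∀ x y, f (x + h • y) ≤ f x + h * f y

section

variable {E : Type*} [AddCommGroup E] [Module ℝ E] {f : E → ℝ}

lemma add_le_of_convexOn_of_homogeneous (hconv : ConvexOn ℝ univ f)
    (hhom : ∀ t : ℝ, 0 < t → ∀ x, f (t • x) = t * f x) (a b : E) :
    f (a + b) ≤ f a + f b := by
  have hmid := hconv.2 (mem_univ a) (mem_univ b) (by norm_num : (0 : ℝ) ≤ 1 / 2)
    (by norm_num : (0 : ℝ) ≤ 1 / 2) (by norm_num)
  have hdouble : (2 : ℝ) • ((1 / 2 : ℝ) • a + (1 / 2 : ℝ) • b) = a + b := by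
    rw [smul_add, smul_smul, smul_smul]; norm_num
  have h2 := hhom 2 two_pos ((1 / 2 : ℝ) • a + (1 / 2 : ℝ) • b)
  rw [hdouble] at h2
  simp only [smul_eq_mul] at hmid
  linarith

lemma convexOn_univ_of_add_le_of_homogeneous (hsub : ∀ a b, f (a + b) ≤ f a + f b)
    (hhom : ∀ t : ℝ, 0 < t → ∀ x, f (t • x) = t * f x) : ConvexOn ℝ univ f := by
  refine ⟨convex_univ, fun x _ y _ a b ha hb hab => ?_⟩
  rcases ha.eq_or_lt with rfl | ha
  · obtain rfl : b = 1 := by linarith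
    simp
  rcases hb.eq_or_lt with rfl | hb
  · obtain rfl : a = 1 := by linarith
    simp
  calc f (a • x + b • y) ≤ f (a • x) + f (b • y) := hsub _ _
    _ = a • f x + b • f y := by rw [hhom a ha, hhom b hb, smul_eq_mul, smul_eq_mul]

namespace ScaledSubadditive

lemma zero : ScaledSubadditive f 0 := fun x y => by simp

lemma add {h h' : ℝ} (H : ScaledSubadditive f h) (H' : ScaledSubadditive f h') :
    ScaledSubadditive f (h + h') := fun x y =>
  calc f (x + (h + h') • y) = f ((x + h • y) + h' • y) := by rw [add_smul, add_assoc]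
    _ ≤ f (x + h • y) + h' * f y := H' _ _
    _ ≤ f x + (h + h') * f y := by linarith [H x y]

lemma natCast_mul {h : ℝ} (H : ScaledSubadditive f h) (n : ℕ) :
    ScaledSubadditive f (n * h) := by
  induction n with
  | zero => simpa using zero
  | succ n ih => simpa [add_mul] using ih.add H

lemma of_forall_lt {h₀ : ℝ} (hh₀ : 0 < h₀)
    (hsmall : ∀ h, 0 < h → h < h₀ → ScaledSubadditive f h) {h : ℝ} (hh : 0 < h) :
    ScaledSubadditive f h := by
  obtain ⟨n, hn⟩ := exists_nat_gt (h / h₀)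
  have hnpos : (0 : ℝ) < n := (div_pos hh hh₀).trans hn
  have hδ : h / n < h₀ := by
    rw [div_lt_iff₀ hnpos, mul_comm]
    exact (div_lt_iff₀ hh₀).1 hn
  simpa [mul_div_cancel₀ h hnpos.ne'] using
    (hsmall (h / n) (div_pos hh hnpos) hδ).natCast_mul n

lemma homogeneous (hf0 : f 0 = 0) (H : ∀ h, 0 < h → ScaledSubadditive f h) {t : ℝ}
    (ht : 0 < t) (x : E) : f (t • x) = t * f x := by
  have hle : f (t • x) ≤ t * f x := by simpa [hf0] using H t ht 0 x
  have hge : f x ≤ t⁻¹ * f (t • x) := by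
    simpa [hf0, smul_smul, inv_mul_cancel₀ ht.ne'] using H t⁻¹ (inv_pos.2 ht) 0 (t • x)
  have := mul_le_mul_of_nonneg_left hge ht.le
  rw [← mul_assoc, mul_inv_cancel₀ ht.ne', one_mul] at this
  linarith

lemma of_convexOn_of_homogeneous (hconv : ConvexOn ℝ univ f)
    (hhom : ∀ t : ℝ, 0 < t → ∀ x, f (t • x) = t * f x) {h : ℝ} (hh : 0 ≤ h) :
    ScaledSubadditive f h := by
  rcases hh.eq_or_lt with rfl | hh
  · exact zero
  intro x y
  rw [← hhom h hh y]
  exact add_le_of_convexOn_of_homogeneous hconv hhom x _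

end ScaledSubadditive

lemma infConvDomain_eq_iff (hf0 : f 0 = 0) (h : ℝ) :
    {p : E × ℝ | ∃ y, f (p.1 - h • y) + h * f y + h ≤ p.2} = {p | f p.1 + h ≤ p.2} ↔
      ScaledSubadditive f h := by
  constructor
  · intro hset x y
    have hmem : (x + h • y, f x + h * f y + h) ∈ {p : E × ℝ | f p.1 + h ≤ p.2} :=
      hset ▸ ⟨y, by simp⟩
    simpa using hmem
  · intro H
    ext ⟨x, s⟩
    refine ⟨fun ⟨y, hy⟩ => ?_, fun hx => ⟨0, by simpa [hf0] using hx⟩⟩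
    have := H (x - h • y) y
    rw [sub_add_cancel] at this
    simp only [mem_ofPred_eq] at hy ⊢
    linarith

end

theorem cone_support_general (m : ℕ) (φ : EuclideanSpace ℝ (Fin m) → ℝ)
    (hφ0 : φ 0 = 0) :
    ((∃ h₀ > (0 : ℝ), ∀ h : ℝ, 0 < h → h < h₀ →
        {p : EuclideanSpace ℝ (Fin m) × ℝ |
            ∃ y : EuclideanSpace ℝ (Fin m), φ (p.1 - h • y) + h * φ y + h ≤ p.2}
          = {p : EuclideanSpace ℝ (Fin m) × ℝ | φ p.1 + h ≤ p.2})
      ↔ (ConvexOn ℝ Set.univ φ ∧ ∀ t : ℝ, 0 < t → ∀ x, φ (t • x) = t * φ x))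
    ∧ ((ConvexOn ℝ Set.univ φ ∧ ∀ t : ℝ, 0 < t → ∀ x, φ (t • x) = t * φ x) →
        ∀ h : ℝ, 0 ≤ h →
          {p : EuclideanSpace ℝ (Fin m) × ℝ |
              ∃ y : EuclideanSpace ℝ (Fin m), φ (p.1 - h • y) + h * φ y + h ≤ p.2}
            = {p : EuclideanSpace ℝ (Fin m) × ℝ | φ p.1 + h ≤ p.2}) := by
  simp only [infConvDomain_eq_iff hφ0]
  have of_cone : (ConvexOn ℝ univ φ ∧ ∀ t : ℝ, 0 < t → ∀ x, φ (t • x) = t * φ x) →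
      ∀ h : ℝ, 0 ≤ h → ScaledSubadditive φ h := fun ⟨hconv, hhom⟩ _ hh =>
    .of_convexOn_of_homogeneous hconv hhom hh
  refine ⟨⟨fun ⟨h₀, hh₀, hsmall⟩ => ?_, fun hcone => ⟨1, one_pos, fun h hh _ =>
    of_cone hcone h hh.le⟩⟩, of_cone⟩
  have hall : ∀ h, 0 < h → ScaledSubadditive φ h := fun _ hh => .of_forall_lt hh₀ hsmall hh
  have hhom : ∀ t : ℝ, 0 < t → ∀ x, φ (t • x) = t * φ x := fun _ ht =>
    ScaledSubadditive.homogeneous hφ0 hall ht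
  have hsub : ∀ a b, φ (a + b) ≤ φ a + φ b := fun a b => by
    simpa using hall 1 one_pos a b
  exact ⟨convexOn_univ_of_add_le_of_homogeneous hsub hhom, hhom⟩

/-- with `φ : ℝ^{n-1} → ℝ` continuous, `φ(0)=0`, `Ω_h` the translated
epigraph and `B_h` the domain of the inf-convolution, there exists `h₀ > 0` with
`B_h = Ω_h` for all `h ∈ (0,h₀)` iff `φ` is convex and positively 1-homogeneous
(i.e. `Ω` is a convex cone), and in that case `B_h = Ω_h` for all `h ≥ 0`. -/
theorem cone_support (m : ℕ) (φ : EuclideanSpace ℝ (Fin m) → ℝ)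
    (hφ_cont : Continuous φ) (hφ0 : φ 0 = 0) :
    ((∃ h₀ > (0 : ℝ), ∀ h : ℝ, 0 < h → h < h₀ →
        {p : EuclideanSpace ℝ (Fin m) × ℝ |
            ∃ y : EuclideanSpace ℝ (Fin m), φ (p.1 - h • y) + h * φ y + h ≤ p.2}
          = {p : EuclideanSpace ℝ (Fin m) × ℝ | φ p.1 + h ≤ p.2})
      ↔ (ConvexOn ℝ Set.univ φ ∧ ∀ t : ℝ, 0 < t → ∀ x, φ (t • x) = t * φ x))
    ∧ ((ConvexOn ℝ Set.univ φ ∧ ∀ t : ℝ, 0 < t → ∀ x, φ (t • x) = t * φ x) →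
        ∀ h : ℝ, 0 ≤ h →
          {p : EuclideanSpace ℝ (Fin m) × ℝ |
              ∃ y : EuclideanSpace ℝ (Fin m), φ (p.1 - h • y) + h * φ y + h ≤ p.2}
            = {p : EuclideanSpace ℝ (Fin m) × ℝ | φ p.1 + h ≤ p.2}) :=
  cone_support_general m φ hφ0
end

section
/- Let φ : ℝ^{n−1} → ℝ be convex with φ(0) = 0, Ω its epigraph, and for h > 0 let B_h = { (x₁, x₂) : ∃ y₁ ∈ ℝ^{n−1}, x₂ ≥ φ(x₁ − h y₁) + h φ(y₁) + h }. Then B_h = { (x₁, x₂) ∈ ℝⁿ : x₂ ≥ h + (1 + h) φ(x₁/(1 + h)) }. -/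
theorem sub_smul_inv_one_add_smul {𝕜 E : Type*} [Field 𝕜] [AddCommGroup E] [Module 𝕜 E]
    {h : 𝕜} (hh : 1 + h ≠ 0) (x : E) :
    x - h • (1 + h)⁻¹ • x = (1 + h)⁻¹ • x := by
  match_scalars
  field_simp
  ring

section

variable {𝕜 E : Type*} [Field 𝕜] [LinearOrder 𝕜] [IsStrictOrderedRing 𝕜] [AddCommGroup E]
  [Module 𝕜 E]

/-- `(1 + h)⁻¹ • x` is the convex combination of `x - h • y` and `y` with weights
`1 : h`. -/
theorem ConvexOn.one_add_mul_apply_inv_smul_le {φ : E → 𝕜} (hφ : ConvexOn 𝕜 Set.univ φ)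
    {h : 𝕜} (hh : 0 ≤ h) (x y : E) :
    (1 + h) * φ ((1 + h)⁻¹ • x) ≤ φ (x - h • y) + h * φ y := by
  have h1 : 0 < 1 + h := by linarith
  have hcomb : (1 + h)⁻¹ • (x - h • y) + (h * (1 + h)⁻¹) • y = (1 + h)⁻¹ • x := by module
  have hconv := hφ.2 (Set.mem_univ (x - h • y)) (Set.mem_univ y) (inv_nonneg.2 h1.le)
    (mul_nonneg hh (inv_nonneg.2 h1.le)) (by field_simp : (1 + h)⁻¹ + h * (1 + h)⁻¹ = 1)
  rw [hcomb, smul_eq_mul, smul_eq_mul] at hconv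
  calc (1 + h) * φ ((1 + h)⁻¹ • x)
      ≤ (1 + h) * ((1 + h)⁻¹ * φ (x - h • y) + h * (1 + h)⁻¹ * φ y) := by gcongr
    _ = φ (x - h • y) + h * φ y := by field_simp

end

theorem convex_support_general (m : ℕ) (φ : EuclideanSpace ℝ (Fin m) → ℝ)
    (hφ_conv : ConvexOn ℝ Set.univ φ) :
    ∀ h : ℝ, 0 < h →
      {p : EuclideanSpace ℝ (Fin m) × ℝ |
          ∃ y : EuclideanSpace ℝ (Fin m), φ (p.1 - h • y) + h * φ y + h ≤ p.2}
        = {p : EuclideanSpace ℝ (Fin m) × ℝ | h + (1 + h) * φ ((1 + h)⁻¹ • p.1) ≤ p.2} := by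
  intro h hh
  ext ⟨x, t⟩
  simp only [Set.mem_ofPred_eq]
  constructor
  · rintro ⟨y, hy⟩
    linarith [hφ_conv.one_add_mul_apply_inv_smul_le hh.le x y]
  · intro hx
    refine ⟨(1 + h)⁻¹ • x, ?_⟩
    rw [sub_smul_inv_one_add_smul (by positivity)]
    linarith

/-- for `φ` convex with `φ(0)=0` and `h > 0`,
`B_h = {(x₁,x₂) : x₂ ≥ h + (1+h) φ(x₁/(1+h))}`. -/
theorem convex_support (m : ℕ) (φ : EuclideanSpace ℝ (Fin m) → ℝ)
    (hφ_conv : ConvexOn ℝ Set.univ φ) (hφ0 : φ 0 = 0) :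
    ∀ h : ℝ, 0 < h →
      {p : EuclideanSpace ℝ (Fin m) × ℝ |
          ∃ y : EuclideanSpace ℝ (Fin m), φ (p.1 - h • y) + h * φ y + h ≤ p.2}
        = {p : EuclideanSpace ℝ (Fin m) × ℝ | h + (1 + h) * φ ((1 + h)⁻¹ • p.1) ≤ p.2} :=
  convex_support_general m φ hφ_conv
end

section
/- Let a > 1 and γ > max(a/(n−1), 1), and let g : Ω → (0, ∞) satisfy g(x) ≥ A₃(1 + ‖x‖^γ) and ‖∇g(x)‖ ≤ A₄(1 + ‖x‖^{γ−1}) for all x ∈ Ω (A₃, A₄ > 0), and let W : Ω₁ → (0, ∞) satisfy A₁‖x‖^γ ≤ W(x) ≤ A₂(1 + ‖x‖^γ). Then there exist constants C > 0 and h₀ > 0 such that for all 0 < h < h₀ and all x ∈ Ω_h, |Q_h^W(g)(x) − g(x)| ≤ C h (1 + ‖x‖^γ). -/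
open Bornology

lemma helper_add_rpow {β a b : ℝ} (hβ : 0 ≤ β) (ha : 0 ≤ a) (hb : 0 ≤ b) :
    (a + b) ^ β ≤ 2 ^ β * (a ^ β + b ^ β) := by
  have key : ∀ u v : ℝ, 0 ≤ u → 0 ≤ v → u ≤ v → (u + v) ^ β ≤ 2 ^ β * (u ^ β + v ^ β) := by
    intro u v hu hv huv
    calc (u + v) ^ β ≤ (2 * v) ^ β :=
          Real.rpow_le_rpow (by linarith) (by linarith) hβ
      _ = 2 ^ β * v ^ β := Real.mul_rpow (by norm_num) hv
      _ ≤ 2 ^ β * (u ^ β + v ^ β) := by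
          have h1 : 0 ≤ u ^ β := Real.rpow_nonneg hu β
          have h2 : (0:ℝ) ≤ 2 ^ β := Real.rpow_nonneg (by norm_num) β
          nlinarith
  rcases le_total a b with hab | hab
  · exact key a b ha hb hab
  · have := key b a hb ha hab
    calc (a + b) ^ β = (b + a) ^ β := by ring_nf
      _ ≤ 2 ^ β * (b ^ β + a ^ β) := this
      _ = 2 ^ β * (a ^ β + b ^ β) := by ring

lemma helper_young1 {β ε r : ℝ} (hβ : 0 < β) (hε : 0 < ε) (hr : 0 ≤ r) :
    r ≤ ε * r ^ (1 + β) + (ε⁻¹) ^ (1 / β) := by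
  set K := (ε⁻¹) ^ (1 / β) with hKdef
  have hKpos : 0 < K := Real.rpow_pos_of_pos (inv_pos.mpr hε) _
  rcases le_total r K with h | h
  · have : 0 ≤ ε * r ^ (1 + β) := mul_nonneg hε.le (Real.rpow_nonneg hr _)
    linarith
  · have hrpos : 0 < r := lt_of_lt_of_le hKpos h
    have hKβ : K ^ β = ε⁻¹ := by
      rw [hKdef, ← Real.rpow_mul (inv_pos.mpr hε).le, one_div,
        inv_mul_cancel₀ hβ.ne', Real.rpow_one]
    have h1 : ε⁻¹ ≤ r ^ β := by
      rw [← hKβ]; exact Real.rpow_le_rpow hKpos.le h hβ.le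
    have h2 : r ^ (1 + β) = r * r ^ β := by
      rw [Real.rpow_add hrpos, Real.rpow_one]
    have : ε * (r * r ^ β) ≥ ε * (r * ε⁻¹) := by
      apply mul_le_mul_of_nonneg_left _ hε.le
      exact mul_le_mul_of_nonneg_left h1 hrpos.le
    have h3 : ε * (r * ε⁻¹) = r := by field_simp
    rw [h2]; nlinarith

lemma helper_young2 {β ε r R : ℝ} (hβ : 0 < β) (hε : 0 < ε) (hr : 0 ≤ r) (hR : 0 ≤ R) :
    r * R ^ β ≤ ε * r ^ (1 + β) + (ε⁻¹) ^ (1 / β) * R ^ (1 + β) := by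
  set c := ε ^ (1 / β) with hcdef
  have hcpos : 0 < c := Real.rpow_pos_of_pos hε _
  have hcβ : c ^ β = ε := by
    rw [hcdef, ← Real.rpow_mul hε.le, one_div, inv_mul_cancel₀ hβ.ne', Real.rpow_one]
  have hKnn : 0 ≤ (ε⁻¹) ^ (1 / β) := Real.rpow_nonneg (inv_pos.mpr hε).le _
  rcases hr.eq_or_lt with h0 | hrpos
  · rw [← h0]
    have : (0:ℝ) * R ^ β = 0 := by ring
    rw [this]
    positivity
  rcases le_total R (c * r) with hle | hle
  · have h1 : R ^ β ≤ ε * r ^ β := by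
      calc R ^ β ≤ (c * r) ^ β := Real.rpow_le_rpow hR hle hβ.le
        _ = c ^ β * r ^ β := Real.mul_rpow hcpos.le hr
        _ = ε * r ^ β := by rw [hcβ]
    have h2 : r ^ (1 + β) = r * r ^ β := by rw [Real.rpow_add hrpos, Real.rpow_one]
    have h3 : r * R ^ β ≤ r * (ε * r ^ β) := mul_le_mul_of_nonneg_left h1 hr
    have h4 : 0 ≤ (ε⁻¹) ^ (1 / β) * R ^ (1 + β) := mul_nonneg hKnn (Real.rpow_nonneg hR _)
    rw [h2]; nlinarith
  · have hRpos : 0 < R := lt_of_lt_of_le (by positivity) hle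
    have hinv : (ε⁻¹) ^ (1 / β) = c⁻¹ := by
      rw [hcdef, Real.inv_rpow hε.le]
    have h1 : r ≤ c⁻¹ * R := by
      rw [le_inv_mul_iff₀ hcpos]; linarith
    have h2 : R ^ (1 + β) = R * R ^ β := by rw [Real.rpow_add hRpos, Real.rpow_one]
    have h3 : r * R ^ β ≤ (c⁻¹ * R) * R ^ β :=
      mul_le_mul_of_nonneg_right h1 (Real.rpow_nonneg hR _)
    have h4 : 0 ≤ ε * r ^ (1 + β) := mul_nonneg hε.le (Real.rpow_nonneg hr _)
    rw [hinv, h2]; nlinarith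

/-- The inf-convolution `Q_h^W(g)` where `g`, `W` are extended by `+∞` outside the
epigraph `Ω = {x₂ ≥ φ(x₁)}` and its translate `Ω₁ = {x₂ ≥ φ(x₁) + 1}` respectively. -/
noncomputable def Qext (m : ℕ) (φ : EuclideanSpace ℝ (Fin m) → ℝ)
    (g W : EuclideanSpace ℝ (Fin m) × ℝ → ℝ) (h : ℝ)
    (x : EuclideanSpace ℝ (Fin m) × ℝ) : EReal :=
  ⨅ y : EuclideanSpace ℝ (Fin m) × ℝ,
    (if φ ((x - h • y).1) ≤ (x - h • y).2 then ((g (x - h • y) : ℝ) : EReal) else ⊤)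
    + (h : EReal) * (if φ y.1 + 1 ≤ y.2 then ((W y : ℝ) : EReal) else ⊤)

/-- under the admissibility growth conditions on `(g, W)`, there exist
`C > 0`, `h₀ > 0` such that `|Q_h^W(g)(x) − g(x)| ≤ C h (1 + ‖x‖^γ)` for all
`0 < h < h₀` and `x ∈ Ω_h`. -/
theorem Q_close_to_g (m : ℕ) (hm : 1 ≤ m) (a γ A₁ A₂ A₃ A₄ : ℝ)
    (ha : 1 < a) (hγ : γ > max (a / m) 1)
    (hA₁ : 0 < A₁) (hA₂ : 0 < A₂) (hA₃ : 0 < A₃) (hA₄ : 0 < A₄)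
    (φ : EuclideanSpace ℝ (Fin m) → ℝ)
    (hφ_conv : ConvexOn ℝ Set.univ φ) (hφ0 : φ 0 = 0) (hφ_nonneg : ∀ x, 0 ≤ φ x)
    (g W : EuclideanSpace ℝ (Fin m) × ℝ → ℝ)
    (Dg : EuclideanSpace ℝ (Fin m) × ℝ → (EuclideanSpace ℝ (Fin m) × ℝ →L[ℝ] ℝ))
    (hg_pos : ∀ x ∈ {p : EuclideanSpace ℝ (Fin m) × ℝ | φ p.1 ≤ p.2}, 0 < g x)
    (hg_lip : ∀ s : Set (EuclideanSpace ℝ (Fin m) × ℝ), IsBounded s →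
      ∃ K : NNReal, LipschitzOnWith K g (s ∩ {p | φ p.1 ≤ p.2}))
    (hg_diff : ∀ x ∈ {p : EuclideanSpace ℝ (Fin m) × ℝ | φ p.1 ≤ p.2},
      HasFDerivWithinAt g (Dg x) {p | φ p.1 ≤ p.2} x)
    (hC1 : ∀ x ∈ {p : EuclideanSpace ℝ (Fin m) × ℝ | φ p.1 + 1 ≤ p.2},
      A₁ * ‖x‖ ^ γ ≤ W x)
    (hC2 : ∀ x ∈ {p : EuclideanSpace ℝ (Fin m) × ℝ | φ p.1 + 1 ≤ p.2},
      W x ≤ A₂ * (1 + ‖x‖ ^ γ))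
    (hC3 : ∀ x ∈ {p : EuclideanSpace ℝ (Fin m) × ℝ | φ p.1 ≤ p.2},
      A₃ * (1 + ‖x‖ ^ γ) ≤ g x)
    (hC4 : ∀ x ∈ {p : EuclideanSpace ℝ (Fin m) × ℝ | φ p.1 ≤ p.2},
      ‖Dg x‖ ≤ A₄ * (1 + ‖x‖ ^ (γ - 1))) :
    ∃ C > (0 : ℝ), ∃ h₀ > (0 : ℝ), ∀ h : ℝ, 0 < h → h < h₀ →
      ∀ x ∈ {p : EuclideanSpace ℝ (Fin m) × ℝ | φ p.1 + h ≤ p.2},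
        Qext m φ g W h x ≠ ⊤ ∧
        |(Qext m φ g W h x).toReal - g x| ≤ C * h * (1 + ‖x‖ ^ γ) := by
  classical
  set S : Set (EuclideanSpace ℝ (Fin m) × ℝ) := {p | φ p.1 ≤ p.2} with hSdef
  have hγ1 : 1 < γ := lt_of_le_of_lt (le_max_right (a / m) 1) hγ
  set β : ℝ := γ - 1 with hβdef
  have hβ : 0 < β := by rw [hβdef]; linarith only [hγ1]
  have hγβ : γ = 1 + β := by rw [hβdef]; ring
  -- Convexity of the epigraph
  have hSconv : Convex ℝ S := by
    have h1 := hφ_conv.convex_epigraph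
    have h2 : {p : EuclideanSpace ℝ (Fin m) × ℝ | p.1 ∈ Set.univ ∧ φ p.1 ≤ p.2} = S := by
      ext p; simp [hSdef]
    rwa [h2] at h1
  -- Mean value inequality on the epigraph
  have gdiff : ∀ u ∈ S, ∀ v ∈ S,
      |g v - g u| ≤ A₄ * (1 + (max ‖u‖ ‖v‖) ^ β) * ‖v - u‖ := by
    intro u hu v hv
    set M := max ‖u‖ ‖v‖ with hM
    have hMnn : 0 ≤ M := le_trans (norm_nonneg u) (le_max_left _ _)
    set s : Set (EuclideanSpace ℝ (Fin m) × ℝ) := S ∩ Metric.closedBall 0 M with hsdef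
    have hconv : Convex ℝ s := hSconv.inter (convex_closedBall 0 M)
    have hus : u ∈ s := ⟨hu, mem_closedBall_zero_iff.mpr (le_max_left _ _)⟩
    have hvs : v ∈ s := ⟨hv, mem_closedBall_zero_iff.mpr (le_max_right _ _)⟩
    have bound : ∀ z ∈ s, ‖Dg z‖ ≤ A₄ * (1 + M ^ β) := by
      intro z hz
      have h1 := hC4 z hz.1
      have h2 : ‖z‖ ≤ M := mem_closedBall_zero_iff.mp hz.2
      have h3 : ‖z‖ ^ (γ - 1) ≤ M ^ β := by
        rw [hβdef]
        exact Real.rpow_le_rpow (norm_nonneg z) h2 (by rw [← hβdef]; exact hβ.le)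
      have h4 := mul_le_mul_of_nonneg_left h3 hA₄.le
      linarith only [h1, h4]
    have hder : ∀ z ∈ s, HasFDerivWithinAt g (Dg z) s z :=
      fun z hz => (hg_diff z hz.1).mono Set.inter_subset_left
    have := hconv.norm_image_sub_le_of_norm_hasFDerivWithin_le hder bound hus hvs
    simpa [Real.norm_eq_abs] using this
  -- constants
  set P2 : ℝ := 2 ^ β with hP2def
  have hP2 : 0 < P2 := Real.rpow_pos_of_pos two_pos β
  set ε : ℝ := A₁ / (4 * A₄ * (1 + P2)) with hεdef
  have hε : 0 < ε := by rw [hεdef]; positivity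
  set K : ℝ := (ε⁻¹) ^ ((1:ℝ) / β) with hKdef
  have hK : 0 < K := Real.rpow_pos_of_pos (inv_pos.mpr hε) _
  set h₁ : ℝ := (A₁ / (4 * A₄ * P2)) ^ ((1:ℝ) / β) with hh₁def
  have hh₁ : 0 < h₁ := Real.rpow_pos_of_pos (by positivity) _
  set h₀ : ℝ := min 1 h₁ with hh₀def
  have hh₀pos : 0 < h₀ := lt_min one_pos hh₁
  set C₂ : ℝ := A₄ * (1 + P2) * K with hC₂def
  have hC₂pos : 0 < C₂ := by rw [hC₂def]; positivity
  set C₁ : ℝ := A₄ * (1 + 2 * P2) + 2 * A₂ with hC₁def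
  have hC₁pos : 0 < C₁ := by rw [hC₁def]; positivity
  set C : ℝ := C₁ + C₂ with hCdef
  have hCpos : 0 < C := by positivity
  -- core real inequality
  have hεeq : A₄ * (1 + P2) * ε = A₁ / 4 := by
    rw [hεdef]; field_simp
  have hh₁β : h₁ ^ β = A₁ / (4 * A₄ * P2) := by
    rw [hh₁def, ← Real.rpow_mul (by positivity), one_div,
      inv_mul_cancel₀ hβ.ne', Real.rpow_one]
  have hKeq : K = (ε⁻¹) ^ ((1:ℝ) / β) := hKdef
  clear_value β P2 ε K h₁ h₀ C₂ C₁ C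
  have core : ∀ r R h : ℝ, 1 ≤ r → 0 ≤ R → 0 < h → h < h₀ →
      A₄ * r * (1 + (R + h * r) ^ β) ≤ A₁ * r ^ γ + C₂ * (1 + R ^ γ) := by
    intro r R h hr hR hh hhlt
    have hrpos : 0 < r := lt_of_lt_of_le one_pos hr
    have hr0 : 0 ≤ r := hrpos.le
    have hhr : 0 ≤ h * r := by positivity
    have e1 : (R + h * r) ^ β ≤ P2 * (R ^ β + (h * r) ^ β) := by
      rw [hP2def]; exact helper_add_rpow hβ.le hR hhr
    have e2 : (h * r) ^ β = h ^ β * r ^ β := Real.mul_rpow hh.le hr0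
    have e3 : h ^ β ≤ A₁ / (4 * A₄ * P2) := by
      have h4 : h ≤ h₁ :=
        le_of_lt (lt_of_lt_of_le hhlt (le_of_eq_of_le hh₀def (min_le_right _ _)))
      have h5 : h ^ β ≤ h₁ ^ β := Real.rpow_le_rpow hh.le h4 hβ.le
      linarith only [h5, hh₁β]
    have e3' : A₄ * P2 * h ^ β ≤ A₁ / 4 := by
      have heq : A₄ * P2 * (A₁ / (4 * A₄ * P2)) = A₁ / 4 := by field_simp
      have h7 := mul_le_mul_of_nonneg_left e3 (by positivity : (0:ℝ) ≤ A₄ * P2)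
      calc A₄ * P2 * h ^ β ≤ A₄ * P2 * (A₁ / (4 * A₄ * P2)) := h7
        _ = A₁ / 4 := heq
    have erγ : r ^ γ = r * r ^ β := by rw [hγβ, Real.rpow_add hrpos, Real.rpow_one]
    have hrβ : 0 ≤ r ^ β := Real.rpow_nonneg hr0 β
    have hRβ : 0 ≤ R ^ β := Real.rpow_nonneg hR β
    have hRγ : 0 ≤ R ^ γ := Real.rpow_nonneg hR γ
    have hrγ : 0 ≤ r ^ γ := Real.rpow_nonneg hr0 γ
    have y1 : r ≤ ε * r ^ γ + K := by
      have := helper_young1 hβ hε hr0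
      rw [hγβ, hKeq]; exact this
    have y2 : r * R ^ β ≤ ε * r ^ γ + K * R ^ γ := by
      have := helper_young2 (R := R) hβ hε hr0 hR
      rw [hγβ, hKeq]; exact this
    have m1 : A₄ * r * ((R + h * r) ^ β) ≤ A₄ * r * (P2 * (R ^ β + h ^ β * r ^ β)) := by
      rw [← e2]
      exact mul_le_mul_of_nonneg_left e1 (mul_nonneg hA₄.le hr0)
    have m2 : A₄ * P2 * (r * R ^ β) ≤ A₄ * P2 * (ε * r ^ γ + K * R ^ γ) :=
      mul_le_mul_of_nonneg_left y2 (mul_nonneg hA₄.le hP2.le)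
    have m3 : A₄ * r ≤ A₄ * (ε * r ^ γ + K) := mul_le_mul_of_nonneg_left y1 hA₄.le
    have m4 : A₄ * P2 * h ^ β * (r * r ^ β) ≤ (A₁ / 4) * r ^ γ := by
      rw [erγ]
      exact mul_le_mul_of_nonneg_right e3' (mul_nonneg hr0 hrβ)
    calc A₄ * r * (1 + (R + h * r) ^ β)
        = A₄ * r + A₄ * r * ((R + h * r) ^ β) := by ring
      _ ≤ A₄ * (ε * r ^ γ + K) + A₄ * r * (P2 * (R ^ β + h ^ β * r ^ β)) := add_le_add m3 m1
      _ = A₄ * (ε * r ^ γ + K) + (A₄ * P2 * (r * R ^ β) + A₄ * P2 * h ^ β * (r * r ^ β)) := by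
          ring
      _ ≤ A₄ * (ε * r ^ γ + K) + (A₄ * P2 * (ε * r ^ γ + K * R ^ γ) + (A₁ / 4) * r ^ γ) :=
          add_le_add le_rfl (add_le_add m2 m4)
      _ = (A₄ * (1 + P2) * ε) * r ^ γ + ((A₁ / 4) * r ^ γ + A₄ * K + A₄ * P2 * K * R ^ γ) := by
          ring
      _ = (A₁ / 4) * r ^ γ + ((A₁ / 4) * r ^ γ + A₄ * K + A₄ * P2 * K * R ^ γ) := by
          rw [hεeq]
      _ ≤ A₁ * r ^ γ + C₂ * (1 + R ^ γ) := by
          rw [hC₂def]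
          linarith only [mul_nonneg hA₁.le hrγ, mul_nonneg (mul_nonneg hA₄.le hP2.le) hK.le,
            mul_nonneg (mul_nonneg hA₄.le hK.le) hRγ,
            mul_nonneg (mul_nonneg (mul_nonneg hA₄.le hP2.le) hK.le) hRγ]
  refine ⟨C, hCpos, h₀, hh₀pos, ?_⟩
  intro h hh hhlt x hx
  have hh1 : h ≤ 1 :=
    (lt_of_lt_of_le hhlt (le_of_eq_of_le hh₀def (min_le_left _ _))).le
  have hxmem : φ x.1 + h ≤ x.2 := hx
  have hxS : x ∈ S := by
    show φ x.1 ≤ x.2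
    linarith only [hxmem, hh]
  set R := ‖x‖ with hRdef
  have hR : 0 ≤ R := norm_nonneg x
  have hRγ : 0 ≤ R ^ γ := Real.rpow_nonneg hR γ
  set e : EuclideanSpace ℝ (Fin m) × ℝ := (0, 1) with hedef
  have he1 : φ e.1 + 1 ≤ e.2 := by
    simp only [hedef]
    rw [hφ0]
    norm_num
  have henorm : ‖e‖ ≤ 1 := by
    rw [hedef, Prod.norm_def]
    simp
  have hxe1 : (x - h • e).1 = x.1 := by
    simp [hedef]
  have hxe2 : (x - h • e).2 = x.2 - h := by
    simp [hedef]
  have hxeS : x - h • e ∈ S := by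
    show φ (x - h • e).1 ≤ (x - h • e).2
    rw [hxe1, hxe2]
    linarith only [hxmem]
  have hnsmul : ‖h • e‖ ≤ h := by
    rw [norm_smul, Real.norm_eq_abs, abs_of_pos hh]
    calc h * ‖e‖ ≤ h * 1 := mul_le_mul_of_nonneg_left henorm hh.le
      _ = h := mul_one h
  -- upper bound
  have hg_up : |g x - g (x - h • e)| ≤ A₄ * (1 + (R + 1) ^ β) * h := by
    have h1 := gdiff (x - h • e) hxeS x hxS
    have hM : max ‖x - h • e‖ ‖x‖ ≤ R + 1 := by
      apply max_le
      · calc ‖x - h • e‖ ≤ ‖x‖ + ‖h • e‖ := norm_sub_le x (h • e)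
          _ ≤ R + 1 := by rw [← hRdef]; linarith only [hnsmul, hh1]
      · rw [← hRdef]; linarith only []
    have hMnn : 0 ≤ max ‖x - h • e‖ ‖x‖ := le_trans (norm_nonneg _) (le_max_left _ _)
    have h2 : (max ‖x - h • e‖ ‖x‖) ^ β ≤ (R + 1) ^ β :=
      Real.rpow_le_rpow hMnn hM hβ.le
    have h3 : ‖x - (x - h • e)‖ ≤ h := by
      have : x - (x - h • e) = h • e := by abel
      rw [this]; exact hnsmul
    have hMβnn : 0 ≤ (max ‖x - h • e‖ ‖x‖) ^ β := Real.rpow_nonneg hMnn β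
    calc |g x - g (x - h • e)| ≤ A₄ * (1 + (max ‖x - h • e‖ ‖x‖) ^ β) * ‖x - (x - h • e)‖ := h1
      _ ≤ A₄ * (1 + (R + 1) ^ β) * ‖x - (x - h • e)‖ :=
          mul_le_mul_of_nonneg_right
            (mul_le_mul_of_nonneg_left (by linarith only [h2]) hA₄.le) (norm_nonneg _)
      _ ≤ A₄ * (1 + (R + 1) ^ β) * h := by
          have hRp1 : (0:ℝ) ≤ (R + 1) ^ β := Real.rpow_nonneg (by linarith only [hR]) β
          exact mul_le_mul_of_nonneg_left h3 (mul_nonneg hA₄.le (by linarith only [hRp1]))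
  have hWe : W e ≤ 2 * A₂ := by
    have h1 := hC2 e he1
    have h2 : ‖e‖ ^ γ ≤ 1 := Real.rpow_le_one (norm_nonneg e) henorm (by linarith only [hγ1])
    have h3 := mul_le_mul_of_nonneg_left (by linarith only [h2] : 1 + ‖e‖ ^ γ ≤ 2) hA₂.le
    linarith only [h1, h3]
  set U := g (x - h • e) + h * W e with hUdef
  have hQle : Qext m φ g W h x ≤ ((U : ℝ) : EReal) := by
    have h1 : Qext m φ g W h x ≤
        (if φ ((x - h • e).1) ≤ (x - h • e).2 then ((g (x - h • e) : ℝ) : EReal) else ⊤)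
        + (h : EReal) * (if φ e.1 + 1 ≤ e.2 then ((W e : ℝ) : EReal) else ⊤) := by
      exact iInf_le _ e
    have hc1 : φ ((x - h • e).1) ≤ (x - h • e).2 := hxeS
    rw [if_pos hc1, if_pos he1, ← EReal.coe_mul, ← EReal.coe_add] at h1
    exact h1
  have hRβle : R ^ β ≤ 1 + R ^ γ := by
    rcases le_total R 1 with hR1 | hR1
    · have := Real.rpow_le_one hR hR1 hβ.le
      linarith only [this, hRγ]
    · have : R ^ β ≤ R ^ γ := Real.rpow_le_rpow_of_exponent_le hR1
        (by rw [hβdef]; linarith only [])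
      linarith only [this]
  have hUb : U ≤ g x + C₁ * h * (1 + R ^ γ) := by
    have h5 : (R + 1) ^ β ≤ P2 * (R ^ β + 1) := by
      have := helper_add_rpow (a := R) (b := 1) hβ.le hR zero_le_one
      rwa [Real.one_rpow, ← hP2def] at this
    have h6 : 1 + (R + 1) ^ β ≤ (1 + 2 * P2) * (1 + R ^ γ) := by
      have h6a := mul_le_mul_of_nonneg_left hRβle hP2.le
      linarith only [h5, h6a, hRγ, mul_nonneg hP2.le hRγ, hP2.le]
    have h7 : A₄ * (1 + (R + 1) ^ β) * h ≤ A₄ * ((1 + 2 * P2) * (1 + R ^ γ)) * h :=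
      mul_le_mul_of_nonneg_right (mul_le_mul_of_nonneg_left h6 hA₄.le) hh.le
    have h8 := (abs_le.mp hg_up).1
    have h9 : h * W e ≤ h * (2 * A₂) := mul_le_mul_of_nonneg_left hWe hh.le
    rw [hUdef, hC₁def]
    linarith only [h7, h8, h9, mul_nonneg (mul_nonneg hA₂.le hh.le) hRγ]
  -- lower bound
  set L := g x - C₂ * h * (1 + R ^ γ) with hLdef
  have hQge : ((L : ℝ) : EReal) ≤ Qext m φ g W h x := by
    unfold Qext
    apply le_iInf
    intro y
    by_cases hy2 : φ y.1 + 1 ≤ y.2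
    swap
    · rw [if_neg hy2, EReal.mul_top_of_pos (by exact_mod_cast hh)]
      have hA : (if φ ((x - h • y).1) ≤ (x - h • y).2
          then ((g (x - h • y) : ℝ) : EReal) else ⊤) ≠ ⊥ := by
        split
        · exact EReal.coe_ne_bot _
        · exact top_ne_bot
      rw [EReal.add_top_of_ne_bot hA]
      exact le_top
    by_cases hy1 : φ ((x - h • y).1) ≤ (x - h • y).2
    swap
    · rw [if_neg hy1, EReal.top_add_of_ne_bot]
      · exact le_top
      · rw [if_pos hy2, ← EReal.coe_mul]
        exact EReal.coe_ne_bot _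
    · rw [if_pos hy1, if_pos hy2, ← EReal.coe_mul, ← EReal.coe_add, EReal.coe_le_coe_iff]
      set r := ‖y‖ with hrdef
      have hr1 : 1 ≤ r := by
        have h1 : (1:ℝ) ≤ y.2 := by have := hφ_nonneg y.1; linarith only [this, hy2]
        calc (1:ℝ) ≤ y.2 := h1
          _ ≤ |y.2| := le_abs_self _
          _ = ‖y.2‖ := (Real.norm_eq_abs _).symm
          _ ≤ ‖y‖ := norm_snd_le y
      have hyS : x - h • y ∈ S := hy1
      have hd := gdiff (x - h • y) hyS x hxS
      have hMle : max ‖x - h • y‖ ‖x‖ ≤ R + h * r := by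
        apply max_le
        · calc ‖x - h • y‖ ≤ ‖x‖ + ‖h • y‖ := norm_sub_le _ _
            _ = R + h * r := by
                rw [norm_smul, Real.norm_eq_abs, abs_of_pos hh, ← hRdef, ← hrdef]
        · rw [← hRdef]
          linarith only [mul_nonneg hh.le (le_trans zero_le_one hr1)]
      have hMnn : 0 ≤ max ‖x - h • y‖ ‖x‖ := le_trans (norm_nonneg _) (le_max_left _ _)
      have hMβ : (max ‖x - h • y‖ ‖x‖) ^ β ≤ (R + h * r) ^ β :=
        Real.rpow_le_rpow hMnn hMle hβ.le
      have hnorm : ‖x - (x - h • y)‖ = h * r := by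
        have heq : x - (x - h • y) = h • y := by abel
        rw [heq, norm_smul, Real.norm_eq_abs, abs_of_pos hh, ← hrdef]
      have hMβnn : 0 ≤ (max ‖x - h • y‖ ‖x‖) ^ β := Real.rpow_nonneg hMnn β
      have hd2 : g x - g (x - h • y) ≤ A₄ * (1 + (R + h * r) ^ β) * (h * r) := by
        have h1 := (abs_le.mp hd).2
        rw [hnorm] at h1
        have h2 : A₄ * (1 + (max ‖x - h • y‖ ‖x‖) ^ β) * (h * r)
            ≤ A₄ * (1 + (R + h * r) ^ β) * (h * r) :=
          mul_le_mul_of_nonneg_right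
            (mul_le_mul_of_nonneg_left (by linarith only [hMβ]) hA₄.le)
            (mul_nonneg hh.le (le_trans zero_le_one hr1))
        linarith only [h1, h2]
      have hWy := hC1 y hy2
      have hcore := core r R h hr1 hR hh hhlt
      have hcore' : h * (A₄ * r * (1 + (R + h * r) ^ β))
          ≤ h * (A₁ * r ^ γ + C₂ * (1 + R ^ γ)) :=
        mul_le_mul_of_nonneg_left hcore hh.le
      have hWy' : h * (A₁ * r ^ γ) ≤ h * W y := mul_le_mul_of_nonneg_left hWy hh.le
      rw [hLdef]
      linarith only [hd2, hcore', hWy']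
  -- conclusion
  have hQtop : Qext m φ g W h x ≠ ⊤ := ne_top_of_le_ne_top (EReal.coe_ne_top U) hQle
  have hQbot : Qext m φ g W h x ≠ ⊥ := (lt_of_lt_of_le (EReal.bot_lt_coe L) hQge).ne'
  refine ⟨hQtop, ?_⟩
  have ht1 : L ≤ (Qext m φ g W h x).toReal := by
    have := EReal.toReal_le_toReal hQge (EReal.coe_ne_bot L) hQtop
    simpa using this
  have ht2 : (Qext m φ g W h x).toReal ≤ U := by
    have := EReal.toReal_le_toReal hQle hQbot (EReal.coe_ne_top U)
    simpa using this
  rw [abs_le]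
  have hnn : 0 ≤ h * (1 + R ^ γ) := mul_nonneg hh.le (by linarith only [hRγ])
  constructor
  · rw [hLdef] at ht1
    have : (C - C₂) * (h * (1 + R ^ γ)) ≥ 0 :=
      mul_nonneg (by rw [hCdef]; linarith only [hC₁pos]) hnn
    linarith only [ht1, this]
  · have : (C - C₁) * (h * (1 + R ^ γ)) ≥ 0 :=
      mul_nonneg (by rw [hCdef]; linarith only [hC₂pos]) hnn
    linarith only [ht2, hUb, this]
end

section
/- Under the admissibility conditions (C0)–(C4) on (g, W) with constant γ, there exist constants C > 0 and h₀ > 0 such that for all 0 < h < h₀ and all x ∈ Ω_h, |Q_h^W(g)^{1−a}(x) − g^{1−a}(x)| / h ≤ C / (1 + ‖x‖^{γ(a−1)}). -/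
open Bornology

set_option maxHeartbeats 1000000

private lemma self_mul_rpow (t γ : ℝ) (ht : 0 ≤ t) (hγ : 1 < γ) : t * t ^ (γ - 1) = t ^ γ := by
  rcases eq_or_lt_of_le ht with h | h
  · rw [← h, Real.zero_rpow (by linarith), Real.zero_rpow (by linarith), zero_mul]
  · nth_rewrite 1 [← Real.rpow_one t]
    rw [← Real.rpow_add h]; ring_nf

private lemma add_rpow_le (s u p : ℝ) (hs : 0 ≤ s) (hu : 0 ≤ u) (hp : 0 ≤ p) :
    (s + u) ^ p ≤ 2 ^ p * (s ^ p + u ^ p) := by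
  have h1 : s + u ≤ 2 * max s u := by
    rcases le_total s u with h | h
    · rw [max_eq_right h]; linarith
    · rw [max_eq_left h]; linarith
  have h2 : (s + u) ^ p ≤ (2 * max s u) ^ p :=
    Real.rpow_le_rpow (by positivity) h1 hp
  have h3 : (2 * max s u) ^ p = 2 ^ p * (max s u) ^ p :=
    Real.mul_rpow (by norm_num) (le_max_iff.2 (Or.inl hs))
  have h4 : (max s u) ^ p ≤ s ^ p + u ^ p := by
    rcases le_total s u with h | h
    · rw [max_eq_right h]; nlinarith [Real.rpow_nonneg hs p]
    · rw [max_eq_left h]; nlinarith [Real.rpow_nonneg hu p]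
  have h5 : (0:ℝ) < 2 ^ p := by positivity
  calc (s + u) ^ p ≤ 2 ^ p * (max s u) ^ p := h3 ▸ h2
    _ ≤ 2 ^ p * (s ^ p + u ^ p) := by nlinarith

private lemma young' (t R δ γ : ℝ) (ht : 0 ≤ t) (hR : 0 ≤ R) (hδ : 0 < δ) (hγ : 1 < γ) :
    t * R ^ (γ - 1) ≤ δ * t ^ γ + δ ^ (-(1 / (γ - 1))) * R ^ γ := by
  have hγ1 : 0 < γ - 1 := by linarith
  rcases le_total R (δ ^ (1 / (γ - 1)) * t) with h | h
  · have h1 : R ^ (γ - 1) ≤ (δ ^ (1 / (γ - 1)) * t) ^ (γ - 1) :=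
      Real.rpow_le_rpow hR h hγ1.le
    have h2 : (δ ^ (1 / (γ - 1)) * t) ^ (γ - 1) = δ * t ^ (γ - 1) := by
      rw [Real.mul_rpow (by positivity) ht, ← Real.rpow_mul hδ.le,
        one_div, inv_mul_cancel₀ hγ1.ne', Real.rpow_one]
    have h3 : t * R ^ (γ - 1) ≤ δ * (t * t ^ (γ - 1)) := by nlinarith
    rw [self_mul_rpow t γ ht hγ] at h3
    have : (0:ℝ) ≤ δ ^ (-(1 / (γ - 1))) * R ^ γ := by positivity
    linarith
  · have hinv : δ ^ (-(1 / (γ - 1))) * δ ^ (1 / (γ - 1)) = 1 := by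
      rw [← Real.rpow_add hδ]; simp
    have hd : (0:ℝ) < δ ^ (-(1 / (γ - 1))) := by positivity
    have h1 : t ≤ δ ^ (-(1 / (γ - 1))) * R := by
      have := mul_le_mul_of_nonneg_left h hd.le
      rw [← mul_assoc, hinv, one_mul] at this; exact this
    have h2 : t * R ^ (γ - 1) ≤ δ ^ (-(1 / (γ - 1))) * (R * R ^ (γ - 1)) := by
      nlinarith [Real.rpow_nonneg hR (γ - 1)]
    rw [self_mul_rpow R γ hR hγ] at h2
    have : (0:ℝ) ≤ δ * t ^ γ := by positivity
    linarith

private lemma core_ineq (γ A₁ A₄ t R h δ Eδ : ℝ) (hγ : 1 < γ) (hA₁ : 0 < A₁) (hA₄ : 0 < A₄)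
    (ht : 1 ≤ t) (hR : 0 ≤ R) (hh0 : 0 < h)
    (hδdef : δ = A₁ / (3 * (A₄ * 2 ^ (γ - 1))))
    (hEdef : Eδ = δ ^ (-(1 / (γ - 1))))
    (hhδ : h ^ (γ - 1) ≤ δ) :
    A₄ * t * (1 + (R + h * t) ^ (γ - 1)) ≤ A₁ * t ^ γ
      + (A₄ * 2 ^ (γ - 1)) * Eδ * (1 + R ^ γ) := by
  have h2γ : (1:ℝ) ≤ 2 ^ (γ - 1) := Real.one_le_rpow one_le_two (by linarith)
  set B := A₄ * 2 ^ (γ - 1) with hBdef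
  have hB : 0 < B := by positivity
  have hδ : 0 < δ := by rw [hδdef]; positivity
  have hEδ : 0 < Eδ := by rw [hEdef]; positivity
  have ht0 : (0:ℝ) ≤ t := by linarith
  have htγ : (0:ℝ) ≤ t ^ γ := Real.rpow_nonneg ht0 γ
  have hRγ : (0:ℝ) ≤ R ^ γ := Real.rpow_nonneg hR γ
  have step1 : (R + h * t) ^ (γ - 1) ≤ 2 ^ (γ - 1) * (R ^ (γ - 1) + (h * t) ^ (γ - 1)) :=
    add_rpow_le R (h * t) (γ - 1) hR (by positivity) (by linarith)
  have step2 : t * (h * t) ^ (γ - 1) = h ^ (γ - 1) * t ^ γ := by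
    rw [Real.mul_rpow hh0.le ht0]
    rw [show t * (h ^ (γ-1) * t ^ (γ-1)) = h ^ (γ-1) * (t * t ^ (γ-1)) by ring,
      self_mul_rpow t γ ht0 hγ]
  have y1 : t ≤ δ * t ^ γ + Eδ := by
    have := young' t 1 δ γ ht0 zero_le_one hδ hγ
    rw [Real.one_rpow, Real.one_rpow, mul_one, mul_one] at this
    rw [hEdef]; exact this
  have y2 : t * R ^ (γ - 1) ≤ δ * t ^ γ + Eδ * R ^ γ := by
    rw [hEdef]; exact young' t R δ γ ht0 hR hδ hγ
  have hA4B : A₄ ≤ B := by nlinarith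
  have l1 : A₄ * t ≤ B * (δ * t ^ γ) + B * Eδ := by
    have m0 : A₄ * t ≤ B * t := mul_le_mul_of_nonneg_right hA4B ht0
    have m1 := mul_le_mul_of_nonneg_left y1 hB.le
    calc A₄ * t ≤ B * t := m0
      _ ≤ B * (δ * t ^ γ + Eδ) := m1
      _ = B * (δ * t ^ γ) + B * Eδ := by ring
  have l2 : A₄ * t * (R + h * t) ^ (γ - 1)
      ≤ B * (t * R ^ (γ - 1)) + B * (h ^ (γ - 1) * t ^ γ) := by
    have m1 := mul_le_mul_of_nonneg_left step1 (show (0:ℝ) ≤ A₄ * t by positivity)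
    calc A₄ * t * (R + h * t) ^ (γ - 1)
        ≤ A₄ * t * (2 ^ (γ - 1) * (R ^ (γ - 1) + (h * t) ^ (γ - 1))) := m1
      _ = B * (t * R ^ (γ - 1)) + B * (t * (h * t) ^ (γ - 1)) := by rw [hBdef]; ring
      _ = B * (t * R ^ (γ - 1)) + B * (h ^ (γ - 1) * t ^ γ) := by rw [step2]
  have l3 : B * (h ^ (γ - 1) * t ^ γ) ≤ B * (δ * t ^ γ) := by
    have : h ^ (γ - 1) * t ^ γ ≤ δ * t ^ γ := mul_le_mul_of_nonneg_right hhδ htγ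
    exact mul_le_mul_of_nonneg_left this hB.le
  have l4 : B * (t * R ^ (γ - 1)) ≤ B * (δ * t ^ γ + Eδ * R ^ γ) :=
    mul_le_mul_of_nonneg_left y2 hB.le
  have e1 : B * (δ * t ^ γ) = A₁ / 3 * t ^ γ := by
    rw [hδdef, hBdef]; field_simp
  have e2 : (0:ℝ) ≤ B * Eδ := by positivity
  nlinarith [l1, l2, l3, l4, e1]

private lemma rpow_one_sub_a_diff (a u p q : ℝ) (ha : 1 < a) (hu : 0 < u)
    (hp : u ≤ p) (hq : u ≤ q) :
    |p ^ (1 - a) - q ^ (1 - a)| ≤ (a - 1) * u ^ (-a) * |p - q| := by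
  have hC : ∀ x ∈ Set.Ici u, ‖(1 - a) * x ^ (1 - a - 1)‖ ≤ (a - 1) * u ^ (-a) := by
    intro x hx
    have hxu : u ≤ x := hx
    have hx0 : 0 < x := lt_of_lt_of_le hu hxu
    rw [norm_mul, Real.norm_eq_abs, Real.norm_eq_abs,
      abs_of_nonneg (Real.rpow_nonneg hx0.le _), abs_of_nonpos (by linarith)]
    have h1 : x ^ (1 - a - 1) ≤ u ^ (-a) := by
      have : (1 : ℝ) - a - 1 = -a := by ring
      rw [this]
      exact Real.rpow_le_rpow_of_nonpos hu hxu (by linarith)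
    nlinarith [Real.rpow_nonneg hx0.le (1 - a - 1)]
  have hderiv : ∀ x ∈ Set.Ici u, HasDerivWithinAt (fun t : ℝ => t ^ (1 - a))
      ((1 - a) * x ^ (1 - a - 1)) (Set.Ici u) x := by
    intro x hx
    exact (Real.hasDerivAt_rpow_const (Or.inl (lt_of_lt_of_le hu hx).ne')).hasDerivWithinAt
  have := (convex_Ici u).norm_image_sub_le_of_norm_hasDerivWithin_le hderiv hC hq hp
  simpa [Real.norm_eq_abs, abs_sub_comm] using this

private lemma grad_bound {E : Type*} [NormedAddCommGroup E] [NormedSpace ℝ E] {s : Set E}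
    (hs : Convex ℝ s) {g : E → ℝ} {Dg : E → E →L[ℝ] ℝ}
    (hdiff : ∀ w ∈ s, HasFDerivWithinAt g (Dg w) s w) {x z : E}
    (hx : x ∈ s) (hz : z ∈ s) {M : ℝ} (hM : ∀ w ∈ segment ℝ x z, ‖Dg w‖ ≤ M) :
    |g z - g x| ≤ M * ‖z - x‖ := by
  have hseg : segment ℝ x z ⊆ s := hs.segment_subset hx hz
  have hdiff' : ∀ w ∈ segment ℝ x z, HasFDerivWithinAt g (Dg w) (segment ℝ x z) w :=
    fun w hw => (hdiff w (hseg hw)).mono hseg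
  have := (convex_segment x z).norm_image_sub_le_of_norm_hasFDerivWithin_le hdiff' hM
    (right_mem_segment ℝ x z) (left_mem_segment ℝ x z)
  rw [abs_sub_comm, ← norm_sub_rev z x] at *
  simpa [Real.norm_eq_abs] using this

/-- under the admissibility conditions (C0)–(C4) with constant `γ`
(and `a ≥ n = m+1 ≥ 2`), there exist `C > 0` and `h₀ > 0` such that for `0 < h < h₀` and
`x ∈ Ω_h`, `|Q_h^W(g)^{1-a}(x) − g^{1-a}(x)|/h ≤ C / (1 + ‖x‖^{γ(a-1)})`. -/
theorem Q_power_close_to_g_power (m : ℕ) (hm : 1 ≤ m) (a γ A₁ A₂ A₃ A₄ : ℝ)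
    (ha : (m + 1 : ℝ) ≤ a) (hγ : γ > max (a / m) 1)
    (hA₁ : 0 < A₁) (hA₂ : 0 < A₂) (hA₃ : 0 < A₃) (hA₄ : 0 < A₄)
    (φ : EuclideanSpace ℝ (Fin m) → ℝ)
    (hφ_conv : ConvexOn ℝ Set.univ φ) (hφ0 : φ 0 = 0) (hφ_nonneg : ∀ x, 0 ≤ φ x)
    (g W : EuclideanSpace ℝ (Fin m) × ℝ → ℝ)
    (Dg : EuclideanSpace ℝ (Fin m) × ℝ → (EuclideanSpace ℝ (Fin m) × ℝ →L[ℝ] ℝ))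
    (hg_pos : ∀ x ∈ {p : EuclideanSpace ℝ (Fin m) × ℝ | φ p.1 ≤ p.2}, 0 < g x)
    (hg_lip : ∀ s : Set (EuclideanSpace ℝ (Fin m) × ℝ), IsBounded s →
      ∃ K : NNReal, LipschitzOnWith K g (s ∩ {p | φ p.1 ≤ p.2}))
    (hg_diff : ∀ x ∈ {p : EuclideanSpace ℝ (Fin m) × ℝ | φ p.1 ≤ p.2},
      HasFDerivWithinAt g (Dg x) {p | φ p.1 ≤ p.2} x)
    (hC1 : ∀ x ∈ {p : EuclideanSpace ℝ (Fin m) × ℝ | φ p.1 + 1 ≤ p.2},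
      A₁ * ‖x‖ ^ γ ≤ W x)
    (hC2 : ∀ x ∈ {p : EuclideanSpace ℝ (Fin m) × ℝ | φ p.1 + 1 ≤ p.2},
      W x ≤ A₂ * (1 + ‖x‖ ^ γ))
    (hC3 : ∀ x ∈ {p : EuclideanSpace ℝ (Fin m) × ℝ | φ p.1 ≤ p.2},
      A₃ * (1 + ‖x‖ ^ γ) ≤ g x)
    (hC4 : ∀ x ∈ {p : EuclideanSpace ℝ (Fin m) × ℝ | φ p.1 ≤ p.2},
      ‖Dg x‖ ≤ A₄ * (1 + ‖x‖ ^ (γ - 1))) :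
    ∃ C > (0 : ℝ), ∃ h₀ > (0 : ℝ), ∀ h : ℝ, 0 < h → h < h₀ →
      ∀ x ∈ {p : EuclideanSpace ℝ (Fin m) × ℝ | φ p.1 + h ≤ p.2},
        Qext m φ g W h x ≠ ⊤ ∧
        |(Qext m φ g W h x).toReal ^ (1 - a) - g x ^ (1 - a)| / h
          ≤ C / (1 + ‖x‖ ^ (γ * (a - 1))) := by
  have hγ1 : 1 < γ := lt_of_le_of_lt (le_max_right (a / m) 1) hγ
  have hm' : (1:ℝ) ≤ m := by exact_mod_cast hm
  have ha1 : 1 < a := by linarith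
  have h2γ : (1:ℝ) ≤ 2 ^ (γ - 1) := Real.one_le_rpow one_le_two (by linarith)
  -- constants
  set B : ℝ := A₄ * 2 ^ (γ - 1) with hBdef
  have hB : 0 < B := by positivity
  set δ : ℝ := A₁ / (3 * B) with hδdef
  have hδ : 0 < δ := by positivity
  set Eδ : ℝ := δ ^ (-(1 / (γ - 1))) with hEdef
  have hEδ : 0 < Eδ := by positivity
  set C₂ : ℝ := B * Eδ with hC2def
  have hC₂ : 0 < C₂ := by positivity
  set C₄ : ℝ := A₄ + 2 * B + 2 * A₂ with hC4def
  have hC₄ : 0 < C₄ := by positivity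
  have hC₁ : 0 < C₂ + C₄ := by positivity
  clear_value B δ Eδ C₂ C₄
  have hCa : 0 < (a - 1) := by linarith
  have h5pos : (0:ℝ) < (A₃ / 2) ^ (-a) := Real.rpow_pos_of_pos (by positivity) _
  refine ⟨2 * (a - 1) * (A₃ / 2) ^ (-a) * (C₂ + C₄),
    mul_pos (mul_pos (mul_pos two_pos hCa) h5pos) hC₁,
    min (min 1 (δ ^ (1 / (γ - 1)))) (A₃ / (2 * (C₂ + C₄))), by positivity, ?_⟩
  intro h hh0 hh1 x hx
  simp only [Set.mem_setOf_eq] at hx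
  -- basic bounds on h
  have hh1' : h ≤ 1 := le_trans hh1.le (le_trans (min_le_left _ _) (min_le_left _ _))
  have hhδpow : h ^ (γ - 1) ≤ δ := by
    have h1 : h ≤ δ ^ (1 / (γ - 1)) :=
      le_trans hh1.le (le_trans (min_le_left _ _) (min_le_right _ _))
    have h2 : h ^ (γ - 1) ≤ (δ ^ (1 / (γ - 1))) ^ (γ - 1) :=
      Real.rpow_le_rpow hh0.le h1 (by linarith)
    rwa [← Real.rpow_mul hδ.le, one_div, inv_mul_cancel₀ (by linarith : γ - 1 ≠ 0),
      Real.rpow_one] at h2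
  have hhC : (C₂ + C₄) * h ≤ A₃ / 2 := by
    have h1 : h ≤ A₃ / (2 * (C₂ + C₄)) := le_trans hh1.le (min_le_right _ _)
    rw [le_div_iff₀ (by positivity)] at h1
    nlinarith
  -- geometry
  have hΩconv : Convex ℝ {p : EuclideanSpace ℝ (Fin m) × ℝ | φ p.1 ≤ p.2} := by
    have := hφ_conv.convex_epigraph
    simpa using this
  have hxΩ : x ∈ {p : EuclideanSpace ℝ (Fin m) × ℝ | φ p.1 ≤ p.2} := by
    simp only [Set.mem_setOf_eq]; linarith
  have hRγ : (0:ℝ) ≤ ‖x‖ ^ γ := Real.rpow_nonneg (norm_nonneg x) γ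
  have h1R : (0:ℝ) < 1 + ‖x‖ ^ γ := by positivity
  have hgx : A₃ * (1 + ‖x‖ ^ γ) ≤ g x := hC3 x hxΩ
  -- the segment gradient estimate
  have hkey : ∀ z ∈ {p : EuclideanSpace ℝ (Fin m) × ℝ | φ p.1 ≤ p.2},
      |g z - g x| ≤ A₄ * (1 + (‖x‖ + ‖z - x‖) ^ (γ - 1)) * ‖z - x‖ := by
    intro z hz
    refine grad_bound hΩconv hg_diff hxΩ hz ?_
    intro w hw
    have h1 := hC4 w (hΩconv.segment_subset hxΩ hz hw)
    have h2 : ‖w‖ ≤ max ‖x‖ ‖z‖ :=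
      (convexOn_univ_norm).le_on_segment (Set.mem_univ x) (Set.mem_univ z) hw
    have h3 : max ‖x‖ ‖z‖ ≤ ‖x‖ + ‖z - x‖ := by
      refine max_le (by linarith [norm_nonneg (z - x)]) ?_
      have := norm_add_le x (z - x)
      simpa using this
    have h4 : ‖w‖ ^ (γ - 1) ≤ (‖x‖ + ‖z - x‖) ^ (γ - 1) :=
      Real.rpow_le_rpow (norm_nonneg w) (le_trans h2 h3) (by linarith)
    calc ‖Dg w‖ ≤ A₄ * (1 + ‖w‖ ^ (γ - 1)) := h1
      _ ≤ A₄ * (1 + (‖x‖ + ‖z - x‖) ^ (γ - 1)) := by nlinarith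
  -- the special point y₀
  set y₀ : EuclideanSpace ℝ (Fin m) × ℝ := ((0 : EuclideanSpace ℝ (Fin m)), (1:ℝ)) with hy₀def
  have hy₀n : ‖y₀‖ = 1 := by
    rw [hy₀def, Prod.norm_def]
    simp
  have hy₀feas : φ y₀.1 + 1 ≤ y₀.2 := by
    rw [hy₀def]; simp [hφ0]
  have hz₀sub : x - h • y₀ - x = -(h • y₀) := by abel
  have hz₀x : ‖x - h • y₀ - x‖ = h := by
    rw [hz₀sub, norm_neg, norm_smul, hy₀n, Real.norm_eq_abs, abs_of_pos hh0, mul_one]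
  have hz₀1 : (x - h • y₀).1 = x.1 := by
    rw [hy₀def]; simp
  have hz₀2 : (x - h • y₀).2 = x.2 - h := by
    rw [hy₀def]; simp
  have hz₀Ω : φ (x - h • y₀).1 ≤ (x - h • y₀).2 := by
    rw [hz₀1, hz₀2]; linarith
  -- the upper bound E2
  have hWy₀ : W y₀ ≤ 2 * A₂ := by
    have := hC2 y₀ hy₀feas
    rw [hy₀n, Real.one_rpow] at this
    linarith
  have hWy₀' : 0 ≤ W y₀ := by
    have := hC1 y₀ hy₀feas
    rw [hy₀n, Real.one_rpow] at this
    linarith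
  have hRγ1 : ‖x‖ ^ (γ - 1) ≤ 1 + ‖x‖ ^ γ := by
    rcases le_total ‖x‖ 1 with hc | hc
    · have := Real.rpow_le_one (norm_nonneg x) hc (by linarith : (0:ℝ) ≤ γ - 1)
      linarith
    · have := Real.rpow_le_rpow_of_exponent_le hc (by linarith : γ - 1 ≤ γ)
      linarith
  have E2 : g (x - h • y₀) + h * W y₀ ≤ g x + C₄ * h * (1 + ‖x‖ ^ γ) := by
    have hk := hkey (x - h • y₀) hz₀Ω
    rw [hz₀x] at hk
    have hb1 : (‖x‖ + h) ^ (γ - 1) ≤ 2 ^ (γ - 1) * (‖x‖ ^ (γ - 1) + h ^ (γ - 1)) :=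
      add_rpow_le ‖x‖ h (γ - 1) (norm_nonneg x) hh0.le (by linarith)
    have hhγ1 : h ^ (γ - 1) ≤ 1 := Real.rpow_le_one hh0.le hh1' (by linarith)
    have hb2 : A₄ * (1 + (‖x‖ + h) ^ (γ - 1)) ≤ (A₄ + 2 * B) * (1 + ‖x‖ ^ γ) := by
      have e : A₄ * (2 ^ (γ - 1) * (‖x‖ ^ (γ - 1) + h ^ (γ - 1)))
          = B * (‖x‖ ^ (γ - 1) + h ^ (γ - 1)) := by rw [hBdef]; ring
      have m1 := mul_le_mul_of_nonneg_left hb1 hA₄.le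
      have m2 := mul_le_mul_of_nonneg_left hRγ1 hB.le
      have m3 := mul_le_mul_of_nonneg_left hhγ1 hB.le
      nlinarith [m1, m2, m3]
    have habs := abs_le.mp hk
    have hfin : g (x - h • y₀) - g x ≤ (A₄ + 2 * B) * (1 + ‖x‖ ^ γ) * h :=
      le_trans habs.2 (mul_le_mul_of_nonneg_right hb2 hh0.le)
    have hw : h * W y₀ ≤ 2 * A₂ * h * (1 + ‖x‖ ^ γ) := by
      have m1 := mul_le_mul_of_nonneg_left hWy₀ hh0.le
      have m2 : 0 ≤ h * ‖x‖ ^ γ := mul_nonneg hh0.le hRγ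
      nlinarith [m1, m2, hA₂.le]
    rw [hC4def]; linarith [hfin, hw]
  -- the lower bound E1
  have E1 : ∀ y : EuclideanSpace ℝ (Fin m) × ℝ, φ y.1 + 1 ≤ y.2 →
      φ (x - h • y).1 ≤ (x - h • y).2 →
      g x - C₂ * h * (1 + ‖x‖ ^ γ) ≤ g (x - h • y) + h * W y := by
    intro y hy hyΩ
    have ht1 : 1 ≤ ‖y‖ := by
      have h1 : ‖y.2‖ ≤ ‖y‖ := norm_snd_le y
      rw [Real.norm_eq_abs] at h1
      have h2 := le_abs_self y.2
      have h3 := hφ_nonneg y.1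
      linarith
    have hsub : x - h • y - x = -(h • y) := by abel
    have hnz : ‖x - h • y - x‖ = h * ‖y‖ := by
      rw [hsub, norm_neg, norm_smul, Real.norm_eq_abs, abs_of_pos hh0]
    have hk := hkey (x - h • y) hyΩ
    rw [hnz] at hk
    have hcore := core_ineq γ A₁ A₄ ‖y‖ ‖x‖ h δ Eδ hγ1 hA₁ hA₄ ht1 (norm_nonneg x) hh0
      (by rw [hδdef, hBdef]) (by rw [hEdef]) hhδpow
    have hW := hC1 y hy
    have habs := abs_le.mp hk
    have hstep : g x - g (x - h • y)
        ≤ h * (A₄ * ‖y‖ * (1 + (‖x‖ + h * ‖y‖) ^ (γ - 1))) := by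
      linarith [habs.1]
    have hmul := mul_le_mul_of_nonneg_left hcore hh0.le
    have hWmul : h * (A₁ * ‖y‖ ^ γ) ≤ h * W y :=
      mul_le_mul_of_nonneg_left hW hh0.le
    rw [hC2def, hBdef]; linarith [hstep, hmul, hWmul]
  -- EReal bookkeeping
  set L : ℝ := g x - C₂ * h * (1 + ‖x‖ ^ γ) with hLdef
  set U : ℝ := g (x - h • y₀) + h * W y₀ with hUdef
  clear_value L U
  have hQlb : (L : EReal) ≤ Qext m φ g W h x := by
    refine le_iInf fun y => ?_
    by_cases hcond2 : φ y.1 + 1 ≤ y.2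
    · by_cases hcond1 : φ (x - h • y).1 ≤ (x - h • y).2
      · simp only [hcond1, hcond2, if_true]
        rw [← EReal.coe_mul, ← EReal.coe_add, EReal.coe_le_coe_iff]
        exact E1 y hcond2 hcond1
      · simp only [hcond1, if_false]
        rw [EReal.top_add_of_ne_bot]
        · exact le_top
        · simp only [hcond2, if_true]
          rw [← EReal.coe_mul]
          exact EReal.coe_ne_bot _
    · simp only [hcond2, if_false]
      rw [EReal.mul_top_of_pos (by exact_mod_cast hh0), EReal.add_top_of_ne_bot]
      · exact le_top
      · split <;> simp
  have hQub : Qext m φ g W h x ≤ (U : EReal) := by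
    refine le_trans (iInf_le _ y₀) ?_
    simp only [hz₀Ω, hy₀feas, if_true]
    rw [← EReal.coe_mul, ← EReal.coe_add, hUdef]
  have hnetop : Qext m φ g W h x ≠ ⊤ := by
    intro hq; rw [hq, top_le_iff] at hQub; exact EReal.coe_ne_top U hQub
  have hnebot : Qext m φ g W h x ≠ ⊥ := by
    intro hq; rw [hq, le_bot_iff] at hQlb; exact EReal.coe_ne_bot L hQlb
  refine ⟨hnetop, ?_⟩
  have hqlb : L ≤ (Qext m φ g W h x).toReal := by
    have := EReal.toReal_le_toReal hQlb (EReal.coe_ne_bot L) hnetop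
    simpa using this
  have hqub : (Qext m φ g W h x).toReal ≤ U := by
    have := EReal.toReal_le_toReal hQub hnebot (EReal.coe_ne_top U)
    simpa using this
  set q : ℝ := (Qext m φ g W h x).toReal with hqdef
  clear_value q
  -- real estimates
  have hhP : 0 ≤ h * (1 + ‖x‖ ^ γ) := by positivity
  have h02 : (0:ℝ) ≤ C₂ * h * (1 + ‖x‖ ^ γ) := by positivity
  have h04 : (0:ℝ) ≤ C₄ * h * (1 + ‖x‖ ^ γ) := by positivity
  have habs : |q - g x| ≤ (C₂ + C₄) * h * (1 + ‖x‖ ^ γ) := by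
    rw [abs_le]
    constructor
    · rw [hLdef] at hqlb
      linarith [hqlb, h04]
    · rw [hUdef] at hqub
      linarith [hqub, E2, h02]
  have hu : (0:ℝ) < A₃ / 2 * (1 + ‖x‖ ^ γ) := by positivity
  have hCh : (C₂ + C₄) * h * (1 + ‖x‖ ^ γ) ≤ A₃ / 2 * (1 + ‖x‖ ^ γ) :=
    mul_le_mul_of_nonneg_right hhC h1R.le
  have huq : A₃ / 2 * (1 + ‖x‖ ^ γ) ≤ q := by
    rw [hLdef] at hqlb
    linarith [hqlb, hgx, hCh, h04]
  have hug : A₃ / 2 * (1 + ‖x‖ ^ γ) ≤ g x := by linarith [hgx, hu.le]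
  have mvt := rpow_one_sub_a_diff a (A₃ / 2 * (1 + ‖x‖ ^ γ)) q (g x) ha1 hu huq hug
  -- rpow computations
  have e : (A₃ / 2 * (1 + ‖x‖ ^ γ)) ^ (-a) = (A₃ / 2) ^ (-a) * (1 + ‖x‖ ^ γ) ^ (-a) :=
    Real.mul_rpow (by positivity) h1R.le
  have e2 : (1 + ‖x‖ ^ γ) ^ (-a) * (1 + ‖x‖ ^ γ) = (1 + ‖x‖ ^ γ) ^ (1 - a) := by
    nth_rewrite 2 [← Real.rpow_one (1 + ‖x‖ ^ γ)]
    rw [← Real.rpow_add h1R]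
    ring_nf
  have hb : |q ^ (1 - a) - g x ^ (1 - a)|
      ≤ (a - 1) * (A₃ / 2) ^ (-a) * (C₂ + C₄) * h * (1 + ‖x‖ ^ γ) ^ (1 - a) := by
    have m1 : (0:ℝ) ≤ (a - 1) * (A₃ / 2 * (1 + ‖x‖ ^ γ)) ^ (-a) := by positivity
    have m2 := mul_le_mul_of_nonneg_left habs m1
    calc |q ^ (1 - a) - g x ^ (1 - a)|
        ≤ (a - 1) * (A₃ / 2 * (1 + ‖x‖ ^ γ)) ^ (-a) * |q - g x| := mvt
      _ ≤ (a - 1) * (A₃ / 2 * (1 + ‖x‖ ^ γ)) ^ (-a) * ((C₂ + C₄) * h * (1 + ‖x‖ ^ γ)) := m2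
      _ = (a - 1) * (A₃ / 2) ^ (-a) * (C₂ + C₄) * h
          * ((1 + ‖x‖ ^ γ) ^ (-a) * (1 + ‖x‖ ^ γ)) := by rw [e]; ring
      _ = (a - 1) * (A₃ / 2) ^ (-a) * (C₂ + C₄) * h * (1 + ‖x‖ ^ γ) ^ (1 - a) := by rw [e2]
  -- the polynomial weight comparison
  have hxp : ‖x‖ ^ (γ * (a - 1)) = (‖x‖ ^ γ) ^ (a - 1) :=
    Real.rpow_mul (norm_nonneg x) γ (a - 1)
  have hp1 : (‖x‖ ^ γ) ^ (a - 1) ≤ (1 + ‖x‖ ^ γ) ^ (a - 1) :=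
    Real.rpow_le_rpow hRγ (by linarith) (by linarith)
  have hp2 : (1:ℝ) ≤ (1 + ‖x‖ ^ γ) ^ (a - 1) :=
    Real.one_le_rpow (by linarith) (by linarith)
  have hp3 : (1 + ‖x‖ ^ γ) ^ (1 - a) * (1 + ‖x‖ ^ γ) ^ (a - 1) = 1 := by
    rw [← Real.rpow_add h1R]
    norm_num
  have hp4 : (0:ℝ) < (1 + ‖x‖ ^ γ) ^ (1 - a) := Real.rpow_pos_of_pos h1R _
  have hfin : (1 + ‖x‖ ^ γ) ^ (1 - a) * (1 + ‖x‖ ^ (γ * (a - 1))) ≤ 2 := by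
    have hsum : 1 + ‖x‖ ^ (γ * (a - 1)) ≤ 2 * (1 + ‖x‖ ^ γ) ^ (a - 1) := by
      rw [hxp]; linarith
    have := mul_le_mul_of_nonneg_left hsum hp4.le
    linarith [this, hp3]
  have hpos2 : (0:ℝ) < 1 + ‖x‖ ^ (γ * (a - 1)) := by positivity
  rw [div_le_div_iff₀ hh0 hpos2]
  have hD : (0:ℝ) ≤ (a - 1) * (A₃ / 2) ^ (-a) * (C₂ + C₄) * h :=
    le_of_lt (mul_pos (mul_pos (mul_pos hCa h5pos) hC₁) hh0)
  have final1 := mul_le_mul_of_nonneg_right hb hpos2.le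
  have final2 := mul_le_mul_of_nonneg_left hfin hD
  linarith [final1, final2]
end
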